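/- arXiv:math/9911221 — 6 statements merged into one kernel-verified Lean document; each statement's English description precedes it below -/
import Mathlib

section
/- Let A be a commutative associative unital F-algebra, D₁,...,Dₙ pairwise commuting derivations of A, and ρ ∈ A a fixed element (playing the role of x₁^{ρ⃗}). For p,q ∈ {1,...,n} and u ∈ A define the operator D_{p,q}(u) = ρ(D_q(u)Dₚ − Dₚ(u)D_q) acting on A (with elements of A acting by multiplication). Then for all p,q,r,s and all u,v ∈ A: [D_{p,q}(u), D_{r,s}(v)] = D_{p,s}(ρ D_q(u) D_r(v)) + D_{q,r}(ρ Dₚ(u) D_s(v)) − D_{p,r}(ρ D_q(u) D_s(v)) − D_{q,s}(ρ Dₚ(u) D_r(v)). -/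
/-- Osborn's identity (3.8) for the Special-type operators
`D_{p,q}(u) = ρ(D_q(u)Dₚ − Dₚ(u)D_q)`. -/
theorem special_type_bracket_identity
    {F A : Type*} [Field F] [CommRing A] [Algebra F A]
    (n : ℕ) (D : Fin n → Derivation F A A)
    (hcomm : ∀ p q (a : A), D p (D q a) = D q (D p a)) (ρ : A)
    (Dpq : Fin n → Fin n → A → Module.End F A)
    (hDpq : ∀ p q u, Dpq p q u =
      (LinearMap.mulLeft F ρ) ∘ₗ
        ((LinearMap.mulLeft F (D q u)) ∘ₗ (D p).toLinearMap
          - (LinearMap.mulLeft F (D p u)) ∘ₗ (D q).toLinearMap))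
    (p q r s : Fin n) (u v : A) :
    ⁅Dpq p q u, Dpq r s v⁆
      = Dpq p s (ρ * D q u * D r v) + Dpq q r (ρ * D p u * D s v)
        - Dpq p r (ρ * D q u * D s v) - Dpq q s (ρ * D p u * D r v) := by
  simp only [hDpq]
  ext a
  simp only [Ring.lie_def, LinearMap.sub_apply, LinearMap.comp_apply, LinearMap.mulLeft_apply,
    LinearMap.add_apply, Derivation.coeFn_coe, Module.End.mul_apply, map_sub, map_mul, Derivation.leibniz,
    smul_eq_mul]
  simp only [hcomm p q u, hcomm p r u, hcomm p s u, hcomm q r u, hcomm q s u, hcomm r s u,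
    hcomm p q v, hcomm p r v, hcomm p s v, hcomm q r v, hcomm q s v, hcomm r s v,
    hcomm p q a, hcomm p r a, hcomm p s a, hcomm q r a, hcomm q s a, hcomm r s a]
  ring
end

section
/- With the operators D_{p,q}(u) = ρ(D_q(u)Dₚ − Dₚ(u)D_q) built from pairwise commuting derivations D₁,...,Dₙ of a commutative associative algebra A and a fixed multiplier ρ ∈ A, the span S = span{ D_{p,q}(u) : p,q ∈ {1,...,n}, u ∈ A } is a Lie subalgebra of the Lie algebra of endomorphisms of A under the commutator bracket. -/
/-- The span `S = span{D_{p,q}(u)}` of the Special-type operators is closed under the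
commutator bracket, i.e. is a Lie subalgebra of the endomorphisms of `A`. -/
theorem special_type_span_closed_under_bracket
    {F A : Type*} [Field F] [CommRing A] [Algebra F A]
    (n : ℕ) (D : Fin n → Derivation F A A)
    (hcomm : ∀ p q (a : A), D p (D q a) = D q (D p a)) (ρ : A)
    (Dpq : Fin n → Fin n → A → Module.End F A)
    (hDpq : ∀ p q u, Dpq p q u =
      (LinearMap.mulLeft F ρ) ∘ₗ
        ((LinearMap.mulLeft F (D q u)) ∘ₗ (D p).toLinearMap
          - (LinearMap.mulLeft F (D p u)) ∘ₗ (D q).toLinearMap)) :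
    ∀ X ∈ Submodule.span F
        (Set.range fun t : Fin n × Fin n × A => Dpq t.1 t.2.1 t.2.2),
      ∀ Y ∈ Submodule.span F
        (Set.range fun t : Fin n × Fin n × A => Dpq t.1 t.2.1 t.2.2),
      ⁅X, Y⁆ ∈ Submodule.span F
        (Set.range fun t : Fin n × Fin n × A => Dpq t.1 t.2.1 t.2.2) := by
  have key : ∀ p q r s (u v : A),
      ⁅Dpq p q u, Dpq r s v⁆ =
        Dpq p s (ρ * (D q u * D r v)) + Dpq q r (ρ * (D p u * D s v))
          - Dpq p r (ρ * (D q u * D s v)) - Dpq q s (ρ * (D p u * D r v)) := by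
    intro p q r s u v
    ext a
    simp only [hDpq, LinearMap.mulLeft_apply, Ring.lie_def, LinearMap.sub_apply,
      LinearMap.add_apply, Module.End.mul_apply, LinearMap.comp_apply,
      LinearMap.coe_mk, AddHom.coe_mk, Module.End.mul_apply,
      Derivation.coeFn_coe, Derivation.leibniz, map_sub, smul_eq_mul]
    linear_combination (ρ^2 * D q u * D s v) * hcomm p r a
      - (ρ^2 * D q u * D r v) * hcomm p s a
      - (ρ^2 * D s v * D p u) * hcomm q r a
      + (ρ^2 * D p u * D r v) * hcomm q s a
      - (ρ^2 * D q u * D p a) * hcomm s r v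
      + (ρ^2 * D p u * D q a) * hcomm s r v
      - (ρ^2 * D s v * D r a) * hcomm p q u
      + (ρ^2 * D r v * D s a) * hcomm p q u
  have mem' : ∀ p q u, Dpq p q u ∈ Submodule.span F
      (Set.range fun t : Fin n × Fin n × A => Dpq t.1 t.2.1 t.2.2) :=
    fun p q u => Submodule.subset_span ⟨(p, q, u), rfl⟩
  intro X hX Y hY
  induction hX using Submodule.span_induction with
  | mem x hx =>
    induction hY using Submodule.span_induction with
    | mem y hy =>
      obtain ⟨⟨p, q, u⟩, rfl⟩ := hx
      obtain ⟨⟨r, s, v⟩, rfl⟩ := hy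
      rw [key]
      exact Submodule.sub_mem _ (Submodule.sub_mem _
        (Submodule.add_mem _ (mem' _ _ _) (mem' _ _ _)) (mem' _ _ _)) (mem' _ _ _)
    | zero => simp [Ring.lie_def]
    | add y z _ _ hy hz => rw [show ⁅x, y + z⁆ = ⁅x, y⁆ + ⁅x, z⁆ from by simp only [Ring.lie_def, mul_add, add_mul]; abel]; exact Submodule.add_mem _ hy hz
    | smul c y _ hy => rw [show ⁅x, c • y⁆ = c • ⁅x, y⁆ from by simp only [Ring.lie_def, mul_smul_comm, smul_mul_assoc, smul_sub]]; exact Submodule.smul_mem _ _ hy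
  | zero => simp [Ring.lie_def]
  | add x z _ _ hx hz => rw [show ⁅x + z, Y⁆ = ⁅x, Y⁆ + ⁅z, Y⁆ from by simp only [Ring.lie_def, mul_add, add_mul]; abel]; exact Submodule.add_mem _ hx hz
  | smul c x _ hx => rw [show ⁅c • x, Y⁆ = c • ⁅x, Y⁆ from by simp only [Ring.lie_def, mul_smul_comm, smul_mul_assoc, smul_sub]]; exact Submodule.smul_mem _ _ hx
end

section
/- Let Γ be an abelian group and φ̂ : Γ × Γ → F a skew-symmetric ℤ-bilinear form with Rad φ̂ = {0}. Then for any nonzero α, γ ∈ Γ there exists β ∈ Γ with φ̂(γ, β) φ̂(β, α) ≠ 0. -/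
/-- For a skew-symmetric ℤ-bilinear form with trivial radical, any two nonzero elements are
linked: there is `β` with `φ̂(γ,β)·φ̂(β,α) ≠ 0`. -/
theorem skew_form_linking
    {F Γ : Type*} [Field F] [AddCommGroup Γ]
    (φhat : Γ → Γ → F)
    (hskew : ∀ α β, φhat α β = - φhat β α)
    (haddl : ∀ α β γ, φhat (α + β) γ = φhat α γ + φhat β γ)
    (haddr : ∀ α β γ, φhat α (β + γ) = φhat α β + φhat α γ)
    (hrad : ∀ α : Γ, (∀ β, φhat α β = 0) → α = 0)
    (α γ : Γ) (hα : α ≠ 0) (hγ : γ ≠ 0) :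
    ∃ β : Γ, φhat γ β * φhat β α ≠ 0 := by
  obtain ⟨α₀, hα₀⟩ : ∃ α₀, φhat α₀ α ≠ 0 := by
    by_contra h
    push_neg at h
    exact hα (hrad α fun β => by rw [hskew]; simp [h β])
  obtain ⟨γ₀, hγ₀⟩ : ∃ γ₀, φhat γ γ₀ ≠ 0 := by
    by_contra h
    push_neg at h
    exact hγ (hrad γ h)
  by_cases h1 : φhat γ α₀ = 0
  · by_cases h2 : φhat γ₀ α = 0
    · refine ⟨α₀ + γ₀, ?_⟩
      rw [haddr, haddl, h1, h2]
      simp only [zero_add, add_zero]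
      exact mul_ne_zero hγ₀ hα₀
    · exact ⟨γ₀, mul_ne_zero hγ₀ h2⟩
  · exact ⟨α₀, mul_ne_zero h1 hα₀⟩
end

section
/- Let n = 2m, and let A be the group algebra type space with basis {x^{α,i⃗}}, equipped with the type-H bracket: for u ∈ A_α, v ∈ A_β, [u,v] = Σ_{q=m₁+1}^{m} [∂_q(u)∂̂_{m+q}(v) + ∂̂_q(u)∂_{φ_{m+q}}(v) − ∂̂_{m+q}(u)∂_q(v) − ∂_{φ_{m+q}}(u)∂̂_q(v)] + Σ_{p=1}^{m₁} x₁^{σₚ}[∂ₚ(u)∂_{m+p}(v) − ∂_{m+p}(u)∂ₚ(v)] + φ̂(α,β) u v. Then [·,·] is skew-symmetric, satisfies the Jacobi identity (so (A,[·,·]) is a Lie algebra), and the identity element 1 = x^{0,0⃗} is central. -/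
/-- Exponent monoid for the type-H construction: `Γ × (ℕᵐ × ℕᵐ)`, where the two copies of
`ℕᵐ` record the exponents at the positions `1,...,m` and `m+1,...,2m` (so `n = 2m`). -/
abbrev HIndex (Γ : Type*) (m : ℕ) : Type _ := Γ × ((Fin m → ℕ) × (Fin m → ℕ))

/-- The underlying space `A` of the type-H construction. -/
abbrev HAlg (F Γ : Type*) [Field F] [AddCommGroup Γ] (m : ℕ) : Type _ :=
  AddMonoidAlgebra F (HIndex Γ m)

set_option linter.unnecessarySeqFocus false

section Aux

variable (F : Type*) {Γ : Type*} [Field F] [AddCommGroup Γ] {m : ℕ}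

/-- basis element -/
noncomputable def bas (g : HIndex Γ m) : HAlg F Γ m := AddMonoidAlgebra.single g 1

variable {F}

lemma bas_mul (g h : HIndex Γ m) : bas F g * bas F h = bas F (g + h) := by
  simp [bas, AddMonoidAlgebra.single_mul_single]

lemma bas_zero : bas F (0 : HIndex Γ m) = 1 := rfl

lemma single_eq_smul_bas (g : HIndex Γ m) (c : F) :
    AddMonoidAlgebra.single g c = c • bas F g := by
  simp [bas, Finsupp.smul_single]

/-- a linear endomorphism which is a derivation on products of basis elements is a derivation -/
lemma deriv_ext (D : Module.End F (HAlg F Γ m))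
    (hD : ∀ g h : HIndex Γ m,
      D (bas F g * bas F h) = D (bas F g) * bas F h + bas F g * D (bas F h)) :
    ∀ u v : HAlg F Γ m, D (u * v) = D u * v + u * D v := by
  intro u v
  induction u using AddMonoidAlgebra.induction_on with
  | of g =>
    induction v using AddMonoidAlgebra.induction_on with
    | of g' => simpa [bas, AddMonoidAlgebra.of_apply] using hD g g'
    | add f g hf hg => simp only [mul_add, map_add, hf, hg]; abel
    | smul r f hf => simp only [mul_smul_comm, map_smul, hf, smul_add]
  | add f g hf hg => simp only [add_mul, map_add, hf, hg]; abel
  | smul r f hf => simp only [smul_mul_assoc, map_smul, hf, smul_add]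

/-- two linear endomorphisms commuting on basis elements commute -/
lemma comm_ext (D E : Module.End F (HAlg F Γ m))
    (h : ∀ g : HIndex Γ m, D (E (bas F g)) = E (D (bas F g))) :
    ∀ u : HAlg F Γ m, D (E u) = E (D u) := by
  intro u
  induction u using AddMonoidAlgebra.induction_on with
  | of g => simpa [bas, AddMonoidAlgebra.of_apply] using h g
  | add f g hf hg => simp only [map_add, hf, hg]
  | smul r f hf => simp only [map_smul, hf]

end Aux

/-- The abstract Jacobi identity for brackets of Poisson type built from commuting
derivations with eigen-elements. -/
lemma abstract_jacobi {A : Type*} [CommRing A] {ι : Type*} [Fintype ι] [DecidableEq ι]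
    (X Y : ι → A →+ A) (x c c' : ι → A)
    (hXd : ∀ k a b, X k (a * b) = X k a * b + a * X k b)
    (hYd : ∀ k a b, Y k (a * b) = Y k a * b + a * Y k b)
    (hXX : ∀ k l a, X k (X l a) = X l (X k a))
    (hXY : ∀ k l a, X k (Y l a) = Y l (X k a))
    (hYY : ∀ k l a, Y k (Y l a) = Y l (Y k a))
    (hXx : ∀ k l, X l (x k) = if l = k then c k * x k else 0)
    (hYx : ∀ k l, Y l (x k) = if l = k then c' k * x k else 0)
    (u v w : A)
    (P : A → A → A)
    (hP : ∀ a b, P a b = ∑ k, x k * (X k a * Y k b - Y k a * X k b)) :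
    P (P u v) w + P (P v w) u + P (P w u) v = 0 := by
  classical
  -- the (l,k) summand of `P (P a b) c`
  set T : ι → ι → A → A → A → A := fun l k a b cc =>
    x l * ((X l (x k) * (X k a * Y k b - Y k a * X k b)
        + x k * (X l (X k a) * Y k b + X k a * X l (Y k b)
            - X l (Y k a) * X k b - Y k a * X l (X k b))) * Y l cc
      - (Y l (x k) * (X k a * Y k b - Y k a * X k b)
        + x k * (Y l (X k a) * Y k b + X k a * Y l (Y k b)
            - Y l (Y k a) * X k b - Y k a * Y l (X k b))) * X l cc) with hT
  have hXP : ∀ l a b, X l (P a b)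
      = ∑ k, (X l (x k) * (X k a * Y k b - Y k a * X k b)
          + x k * (X l (X k a) * Y k b + X k a * X l (Y k b)
              - X l (Y k a) * X k b - Y k a * X l (X k b))) := by
    intro l a b
    rw [hP, map_sum]
    refine Finset.sum_congr rfl fun k _ => ?_
    rw [hXd, map_sub, hXd, hXd]; ring
  have hYP : ∀ l a b, Y l (P a b)
      = ∑ k, (Y l (x k) * (X k a * Y k b - Y k a * X k b)
          + x k * (Y l (X k a) * Y k b + X k a * Y l (Y k b)
              - Y l (Y k a) * X k b - Y k a * Y l (X k b))) := by
    intro l a b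
    rw [hP, map_sum]
    refine Finset.sum_congr rfl fun k _ => ?_
    rw [hYd, map_sub, hYd, hYd]; ring
  have expand : ∀ a b cc : A, P (P a b) cc = ∑ l, ∑ k, T l k a b cc := by
    intro a b cc
    rw [hP (P a b) cc]
    refine Finset.sum_congr rfl fun l _ => ?_
    rw [hXP, hYP, Finset.sum_mul, Finset.sum_mul, ← Finset.sum_sub_distrib,
      Finset.mul_sum]
  -- diagonal terms vanish
  have hdiag : ∀ l, T l l u v w + T l l v w u + T l l w u v = 0 := by
    intro l
    simp only [hT, hXx, hYx, if_pos rfl, hXY l l]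
    ring
  -- off-diagonal terms cancel in pairs
  have hpair : ∀ l k, l ≠ k →
      (T l k u v w + T l k v w u + T l k w u v)
        + (T k l u v w + T k l v w u + T k l w u v) = 0 := by
    intro l k hlk
    simp only [hT, hXx, hYx, if_neg hlk, if_neg (Ne.symm hlk), zero_mul, zero_add,
      hXX k l, hYY k l, hXY l k, hXY k l]
    ring
  have key : (∑ a : ι × ι, (T a.1 a.2 u v w + T a.1 a.2 v w u + T a.1 a.2 w u v)) = 0 := by
    refine Finset.sum_involution (fun a _ => a.swap) ?_ ?_ (fun a ha => Finset.mem_univ _)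
      (fun a ha => rfl)
    · rintro ⟨l, k⟩ -
      by_cases hlk : l = k
      · subst hlk; simp [hdiag l]
      · exact hpair l k hlk
    · rintro ⟨l, k⟩ - hne
      intro hsw
      exfalso
      have hlk : k = l := congrArg Prod.fst hsw
      subst hlk
      exact hne (by simpa using hdiag k)
  calc P (P u v) w + P (P v w) u + P (P w u) v
      = ∑ a : ι × ι, (T a.1 a.2 u v w + T a.1 a.2 v w u + T a.1 a.2 w u v) := by
        rw [expand, expand, expand]
        simp only [← Finset.sum_add_distrib]
        rw [← Finset.sum_product', Finset.univ_product_univ]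
    _ = 0 := key




/-- All the data and axioms of the type-H construction, bundled. -/
structure HData (F Γ : Type*) [Field F] [AddCommGroup Γ] (m m1 : ℕ) where
  φ1 : Fin m → (Γ →+ F)
  φ2 : Fin m → (Γ →+ F)
  φhat : Γ → Γ → F
  hskew : ∀ α β, φhat α β = - φhat β α
  haddl : ∀ α β γ, φhat (α + β) γ = φhat α γ + φhat β γ
  haddr : ∀ α β γ, φhat α (β + γ) = φhat α β + φhat α γ
  σ : Fin m → Γ
  hrad : ∀ p : Fin m, p.val < m1 → ∀ β, φhat (σ p) β = 0
  hker : ∀ p : Fin m, p.val < m1 → ∀ q : Fin m, q ≠ p →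
      φ1 q (σ p) = 0 ∧ φ2 q (σ p) = 0
  D1φ : Fin m → Module.End F (HAlg F Γ m)
  D1h : Fin m → Module.End F (HAlg F Γ m)
  D2φ : Fin m → Module.End F (HAlg F Γ m)
  D2h : Fin m → Module.End F (HAlg F Γ m)
  hD1φ : ∀ p (α : Γ) (i j : Fin m → ℕ),
      D1φ p (AddMonoidAlgebra.single (α, (i, j)) 1)
        = φ1 p α • AddMonoidAlgebra.single (α, (i, j)) 1
  hD1h : ∀ p (α : Γ) (i j : Fin m → ℕ),
      D1h p (AddMonoidAlgebra.single (α, (i, j)) 1)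
        = (i p : F) •
            AddMonoidAlgebra.single (α, (fun r => i r - (if r = p then 1 else 0), j)) 1
  hD2φ : ∀ p (α : Γ) (i j : Fin m → ℕ),
      D2φ p (AddMonoidAlgebra.single (α, (i, j)) 1)
        = φ2 p α • AddMonoidAlgebra.single (α, (i, j)) 1
  hD2h : ∀ p (α : Γ) (i j : Fin m → ℕ),
      D2h p (AddMonoidAlgebra.single (α, (i, j)) 1)
        = (j p : F) •
            AddMonoidAlgebra.single (α, (i, fun r => j r - (if r = p then 1 else 0))) 1
  br : HAlg F Γ m →ₗ[F] HAlg F Γ m →ₗ[F] HAlg F Γ m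
  hbr : ∀ g h : HIndex Γ m,
      br (AddMonoidAlgebra.single g 1) (AddMonoidAlgebra.single h 1)
        = (∑ p : Fin m,
            if p.val < m1 then
              AddMonoidAlgebra.single ((σ p, 0) : HIndex Γ m) 1 *
                (((D1φ p + D1h p) (AddMonoidAlgebra.single g 1)) *
                    ((D2φ p + D2h p) (AddMonoidAlgebra.single h 1))
                  - ((D2φ p + D2h p) (AddMonoidAlgebra.single g 1)) *
                    ((D1φ p + D1h p) (AddMonoidAlgebra.single h 1)))
            else
              ((D1φ p + D1h p) (AddMonoidAlgebra.single g 1)) *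
                  (D2h p (AddMonoidAlgebra.single h 1))
                + (D1h p (AddMonoidAlgebra.single g 1)) *
                  (D2φ p (AddMonoidAlgebra.single h 1))
                - (D2h p (AddMonoidAlgebra.single g 1)) *
                  ((D1φ p + D1h p) (AddMonoidAlgebra.single h 1))
                - (D2φ p (AddMonoidAlgebra.single g 1)) *
                  (D1h p (AddMonoidAlgebra.single h 1)))
          + φhat g.1 h.1 •
              (AddMonoidAlgebra.single g 1 * AddMonoidAlgebra.single h 1)

namespace HData

variable {F Γ : Type*} [Field F] [AddCommGroup Γ] {m m1 : ℕ} (S : HData F Γ m m1)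

lemma bD1φ (α : Γ) (i j : Fin m → ℕ) (p) :
    S.D1φ p (bas F ((α, (i, j)) : HIndex Γ m)) = S.φ1 p α • bas F ((α, (i, j)) : HIndex Γ m) :=
  S.hD1φ p α i j

lemma bD1h (α : Γ) (i j : Fin m → ℕ) (p) :
    S.D1h p (bas F ((α, (i, j)) : HIndex Γ m))
      = (i p : F) • bas F ((α, (fun r => i r - (if r = p then 1 else 0), j)) : HIndex Γ m) :=
  S.hD1h p α i j

lemma bD2φ (α : Γ) (i j : Fin m → ℕ) (p) :
    S.D2φ p (bas F ((α, (i, j)) : HIndex Γ m)) = S.φ2 p α • bas F ((α, (i, j)) : HIndex Γ m) :=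
  S.hD2φ p α i j

lemma bD2h (α : Γ) (i j : Fin m → ℕ) (p) :
    S.D2h p (bas F ((α, (i, j)) : HIndex Γ m))
      = (j p : F) • bas F ((α, (i, fun r => j r - (if r = p then 1 else 0))) : HIndex Γ m) :=
  S.hD2h p α i j

lemma index_add (α β : Γ) (i j k l : Fin m → ℕ) :
    ((α, (i, j)) : HIndex Γ m) + (β, (k, l)) = (α + β, (i + k, j + l)) := rfl

lemma D1φ_mul (p) (u v : HAlg F Γ m) :
    S.D1φ p (u * v) = S.D1φ p u * v + u * S.D1φ p v := by
  refine deriv_ext _ ?_ u v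
  rintro ⟨α, i, j⟩ ⟨β, k, l⟩
  rw [bas_mul, index_add, S.bD1φ, S.bD1φ, S.bD1φ, map_add, add_smul,
    smul_mul_assoc, mul_smul_comm, bas_mul, index_add]

lemma D2φ_mul (p) (u v : HAlg F Γ m) :
    S.D2φ p (u * v) = S.D2φ p u * v + u * S.D2φ p v := by
  refine deriv_ext _ ?_ u v
  rintro ⟨α, i, j⟩ ⟨β, k, l⟩
  rw [bas_mul, index_add, S.bD2φ, S.bD2φ, S.bD2φ, map_add, add_smul,
    smul_mul_assoc, mul_smul_comm, bas_mul, index_add]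

lemma D1h_mul (p) (u v : HAlg F Γ m) :
    S.D1h p (u * v) = S.D1h p u * v + u * S.D1h p v := by
  refine deriv_ext _ ?_ u v
  rintro ⟨α, i, j⟩ ⟨β, k, l⟩
  rw [bas_mul, index_add, S.bD1h, S.bD1h, S.bD1h,
    smul_mul_assoc, mul_smul_comm, bas_mul, bas_mul, index_add, index_add]
  simp only [Pi.add_apply, Nat.cast_add]
  rcases Nat.eq_zero_or_pos (i p) with hi | hi
  · have h1 : (fun r => (i r + k r) - (if r = p then 1 else 0))
        = i + fun r => k r - (if r = p then 1 else 0) := by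
      funext r; simp only [Pi.add_apply]
      by_cases hr : r = p <;> simp [hr] <;> omega
    rw [h1, hi]
    simp
  · have h1 : (fun r => (i r + k r) - (if r = p then 1 else 0))
        = (fun r => i r - (if r = p then 1 else 0)) + k := by
      funext r; simp only [Pi.add_apply]
      by_cases hr : r = p <;> simp [hr] <;> omega
    rw [h1, add_smul]
    rcases Nat.eq_zero_or_pos (k p) with hk | hk
    · rw [hk]; simp
    · have h2 : (fun r => i r - (if r = p then 1 else 0)) + k
          = i + fun r => k r - (if r = p then 1 else 0) := by
        funext r; simp only [Pi.add_apply]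
        by_cases hr : r = p <;> simp [hr] <;> omega
      rw [← h2]

lemma D2h_mul (p) (u v : HAlg F Γ m) :
    S.D2h p (u * v) = S.D2h p u * v + u * S.D2h p v := by
  refine deriv_ext _ ?_ u v
  rintro ⟨α, i, j⟩ ⟨β, k, l⟩
  rw [bas_mul, index_add, S.bD2h, S.bD2h, S.bD2h,
    smul_mul_assoc, mul_smul_comm, bas_mul, bas_mul, index_add, index_add]
  simp only [Pi.add_apply, Nat.cast_add]
  rcases Nat.eq_zero_or_pos (j p) with hi | hi
  · have h1 : (fun r => (j r + l r) - (if r = p then 1 else 0))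
        = j + fun r => l r - (if r = p then 1 else 0) := by
      funext r; simp only [Pi.add_apply]
      by_cases hr : r = p <;> simp [hr] <;> omega
    rw [h1, hi]
    simp
  · have h1 : (fun r => (j r + l r) - (if r = p then 1 else 0))
        = (fun r => j r - (if r = p then 1 else 0)) + l := by
      funext r; simp only [Pi.add_apply]
      by_cases hr : r = p <;> simp [hr] <;> omega
    rw [h1, add_smul]
    rcases Nat.eq_zero_or_pos (l p) with hk | hk
    · rw [hk]; simp
    · have h2 : (fun r => j r - (if r = p then 1 else 0)) + l
          = j + fun r => l r - (if r = p then 1 else 0) := by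
        funext r; simp only [Pi.add_apply]
        by_cases hr : r = p <;> simp [hr] <;> omega
      rw [← h2]

-- exponent-shift bookkeeping
lemma dec_comm (p q : Fin m) (i : Fin m → ℕ) :
    (fun r => (i r - (if r = q then 1 else 0)) - (if r = p then 1 else 0))
      = (fun r => (i r - (if r = p then 1 else 0)) - (if r = q then 1 else 0)) := by
  funext r; by_cases h1 : r = q <;> by_cases h2 : r = p <;> simp [h1, h2] <;> omega

lemma dec_coe (p q : Fin m) (i : Fin m → ℕ) :
    ((i q : F) * ((i p - (if p = q then 1 else 0) : ℕ) : F))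
      = ((i p : F) * ((i q - (if q = p then 1 else 0) : ℕ) : F)) := by
  rw [← Nat.cast_mul, ← Nat.cast_mul]
  congr 1
  rcases eq_or_ne p q with rfl | hpq
  · simp
  · simp [hpq, Ne.symm hpq, Nat.mul_comm]

lemma comm_φ1φ1 (p q) (u : HAlg F Γ m) : S.D1φ p (S.D1φ q u) = S.D1φ q (S.D1φ p u) := by
  refine comm_ext _ _ ?_ u
  rintro ⟨α, i, j⟩
  simp only [S.bD1φ, S.bD1h, S.bD2φ, S.bD2h, map_smul, smul_smul]
  congr 1
  ring

lemma comm_φ1φ2 (p q) (u : HAlg F Γ m) : S.D1φ p (S.D2φ q u) = S.D2φ q (S.D1φ p u) := by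
  refine comm_ext _ _ ?_ u
  rintro ⟨α, i, j⟩
  simp only [S.bD1φ, S.bD1h, S.bD2φ, S.bD2h, map_smul, smul_smul]
  congr 1
  ring

lemma comm_φ2φ2 (p q) (u : HAlg F Γ m) : S.D2φ p (S.D2φ q u) = S.D2φ q (S.D2φ p u) := by
  refine comm_ext _ _ ?_ u
  rintro ⟨α, i, j⟩
  simp only [S.bD1φ, S.bD1h, S.bD2φ, S.bD2h, map_smul, smul_smul]
  congr 1
  ring

lemma comm_φ1h1 (p q) (u : HAlg F Γ m) : S.D1φ p (S.D1h q u) = S.D1h q (S.D1φ p u) := by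
  refine comm_ext _ _ ?_ u
  rintro ⟨α, i, j⟩
  simp only [S.bD1φ, S.bD1h, S.bD2φ, S.bD2h, map_smul, smul_smul]
  congr 1
  ring

lemma comm_φ1h2 (p q) (u : HAlg F Γ m) : S.D1φ p (S.D2h q u) = S.D2h q (S.D1φ p u) := by
  refine comm_ext _ _ ?_ u
  rintro ⟨α, i, j⟩
  simp only [S.bD1φ, S.bD1h, S.bD2φ, S.bD2h, map_smul, smul_smul]
  congr 1
  ring

lemma comm_φ2h1 (p q) (u : HAlg F Γ m) : S.D2φ p (S.D1h q u) = S.D1h q (S.D2φ p u) := by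
  refine comm_ext _ _ ?_ u
  rintro ⟨α, i, j⟩
  simp only [S.bD1φ, S.bD1h, S.bD2φ, S.bD2h, map_smul, smul_smul]
  congr 1
  ring

lemma comm_φ2h2 (p q) (u : HAlg F Γ m) : S.D2φ p (S.D2h q u) = S.D2h q (S.D2φ p u) := by
  refine comm_ext _ _ ?_ u
  rintro ⟨α, i, j⟩
  simp only [S.bD1φ, S.bD1h, S.bD2φ, S.bD2h, map_smul, smul_smul]
  congr 1
  ring

lemma comm_h1h1 (p q) (u : HAlg F Γ m) : S.D1h p (S.D1h q u) = S.D1h q (S.D1h p u) := by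
  refine comm_ext _ _ ?_ u
  rintro ⟨α, i, j⟩
  simp only [S.bD1φ, S.bD1h, S.bD2φ, S.bD2h, map_smul, smul_smul]
  rw [dec_comm p q]
  congr 1
  exact dec_coe p q i

lemma comm_h2h2 (p q) (u : HAlg F Γ m) : S.D2h p (S.D2h q u) = S.D2h q (S.D2h p u) := by
  refine comm_ext _ _ ?_ u
  rintro ⟨α, i, j⟩
  simp only [S.bD1φ, S.bD1h, S.bD2φ, S.bD2h, map_smul, smul_smul]
  rw [dec_comm p q]
  congr 1
  exact dec_coe p q j

lemma comm_h1h2 (p q) (u : HAlg F Γ m) : S.D1h p (S.D2h q u) = S.D2h q (S.D1h p u) := by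
  refine comm_ext _ _ ?_ u
  rintro ⟨α, i, j⟩
  simp only [S.bD1φ, S.bD1h, S.bD2φ, S.bD2h, map_smul, smul_smul]
  congr 1
  ring

lemma D1φ_one (p) : S.D1φ p (1 : HAlg F Γ m) = 0 := by
  rw [show (1 : HAlg F Γ m) = bas F ((0 : Γ), ((0 : Fin m → ℕ), (0 : Fin m → ℕ))) from rfl,
    S.bD1φ]
  simp

lemma D2φ_one (p) : S.D2φ p (1 : HAlg F Γ m) = 0 := by
  rw [show (1 : HAlg F Γ m) = bas F ((0 : Γ), ((0 : Fin m → ℕ), (0 : Fin m → ℕ))) from rfl,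
    S.bD2φ]
  simp

lemma D1h_bas0 (p) (τ : Γ) : S.D1h p (bas F ((τ, (0, 0)) : HIndex Γ m)) = 0 := by
  rw [S.bD1h]; simp

lemma D2h_bas0 (p) (τ : Γ) : S.D2h p (bas F ((τ, (0, 0)) : HIndex Γ m)) = 0 := by
  rw [S.bD2h]; simp

lemma D1h_one (p) : S.D1h p (1 : HAlg F Γ m) = 0 := S.D1h_bas0 p 0

lemma D2h_one (p) : S.D2h p (1 : HAlg F Γ m) = 0 := S.D2h_bas0 p 0

/-- The family of "first" derivations, indexed by `Fin m × Bool`. -/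
noncomputable def Xop : Fin m × Bool → Module.End F (HAlg F Γ m)
  | (p, false) => S.D1φ p + S.D1h p
  | (p, true) => if p.val < m1 then 0 else S.D1h p

/-- The family of "second" derivations. -/
noncomputable def Yop : Fin m × Bool → Module.End F (HAlg F Γ m)
  | (p, false) => if p.val < m1 then S.D2φ p + S.D2h p else S.D2h p
  | (p, true) => if p.val < m1 then 0 else S.D2φ p

/-- The structure elements `x^{σₚ}` (or `1`). -/
noncomputable def xel : Fin m × Bool → HAlg F Γ m
  | (p, false) => if p.val < m1 then bas F ((S.σ p, (0, 0)) : HIndex Γ m) else 1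
  | (_, true) => 1

noncomputable def cX : Fin m × Bool → HAlg F Γ m
  | (p, false) => if p.val < m1 then algebraMap F (HAlg F Γ m) (S.φ1 p (S.σ p)) else 0
  | (_, true) => 0

noncomputable def cY : Fin m × Bool → HAlg F Γ m
  | (p, false) => if p.val < m1 then algebraMap F (HAlg F Γ m) (S.φ2 p (S.σ p)) else 0
  | (_, true) => 0

lemma Xop_mul (k) (u v : HAlg F Γ m) :
    S.Xop k (u * v) = S.Xop k u * v + u * S.Xop k v := by
  rcases k with ⟨p, _ | _⟩ <;> simp only [Xop]
  · simp only [LinearMap.add_apply, S.D1φ_mul, S.D1h_mul]; ring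
  · split_ifs
    · simp
    · exact S.D1h_mul p u v

lemma Yop_mul (k) (u v : HAlg F Γ m) :
    S.Yop k (u * v) = S.Yop k u * v + u * S.Yop k v := by
  rcases k with ⟨p, _ | _⟩ <;> simp only [Yop] <;> split_ifs
  · simp only [LinearMap.add_apply, S.D2φ_mul, S.D2h_mul]; ring
  · exact S.D2h_mul p u v
  · simp
  · exact S.D2φ_mul p u v

lemma Xop_one (k) : S.Xop k (1 : HAlg F Γ m) = 0 := by
  rcases k with ⟨p, _ | _⟩ <;> simp only [Xop]
  · simp [LinearMap.add_apply, S.D1φ_one, S.D1h_one]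
  · split_ifs <;> simp [S.D1h_one]

lemma Yop_one (k) : S.Yop k (1 : HAlg F Γ m) = 0 := by
  rcases k with ⟨p, _ | _⟩ <;> simp only [Yop] <;> (try split_ifs) <;>
    simp [LinearMap.add_apply, S.D2φ_one, S.D2h_one]

lemma comm_XX (k l) (a : HAlg F Γ m) : S.Xop k (S.Xop l a) = S.Xop l (S.Xop k a) := by
  rcases k with ⟨p, _ | _⟩ <;> rcases l with ⟨q, _ | _⟩ <;>
    simp only [Xop] <;> (try split_ifs) <;>
    simp only [LinearMap.add_apply, map_add, LinearMap.zero_apply, map_zero,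
      S.comm_φ1φ1, S.comm_φ1h1, S.comm_h1h1] <;> abel

lemma comm_XY (k l) (a : HAlg F Γ m) : S.Xop k (S.Yop l a) = S.Yop l (S.Xop k a) := by
  rcases k with ⟨p, _ | _⟩ <;> rcases l with ⟨q, _ | _⟩ <;>
    simp only [Xop, Yop] <;> (try split_ifs) <;>
    simp only [LinearMap.add_apply, map_add, LinearMap.zero_apply, map_zero,
      S.comm_φ1φ2, S.comm_φ1h2, S.comm_φ2h1, S.comm_h1h2] <;> abel

lemma comm_YY (k l) (a : HAlg F Γ m) : S.Yop k (S.Yop l a) = S.Yop l (S.Yop k a) := by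
  rcases k with ⟨p, _ | _⟩ <;> rcases l with ⟨q, _ | _⟩ <;>
    simp only [Yop] <;> (try split_ifs) <;>
    simp only [LinearMap.add_apply, map_add, LinearMap.zero_apply, map_zero,
      S.comm_φ2φ2, S.comm_φ2h2, S.comm_h2h2] <;> abel

lemma Xop_xel (k l) : S.Xop l (S.xel k) = if l = k then S.cX k * S.xel k else 0 := by
  rcases k with ⟨p, bk⟩
  rcases l with ⟨q, bl⟩
  cases bk with
  | true =>
    simp only [xel, cX, S.Xop_one]
    split_ifs <;> simp
  | false =>
    by_cases hp : p.val < m1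
    · cases bl with
      | false =>
        simp only [xel, if_pos hp, Xop, cX, LinearMap.add_apply, S.bD1φ, S.D1h_bas0, add_zero]
        rcases eq_or_ne q p with rfl | hqp
        · rw [if_pos rfl, Algebra.smul_def]
        · rw [(S.hker p hp q hqp).1, if_neg (by simp [hqp])]
          simp
      | true =>
        simp only [xel, if_pos hp, Xop]
        have hne : ((q, true) : Fin m × Bool) ≠ (p, false) := by simp
        rw [if_neg hne]
        split_ifs with h
        · simp
        · exact S.D1h_bas0 q (S.σ p)
    · simp only [xel, if_neg hp, cX, S.Xop_one]
      split_ifs with h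
      · simp
      · rfl

lemma Yop_xel (k l) : S.Yop l (S.xel k) = if l = k then S.cY k * S.xel k else 0 := by
  rcases k with ⟨p, bk⟩
  rcases l with ⟨q, bl⟩
  cases bk with
  | true =>
    simp only [xel, cY, S.Yop_one]
    split_ifs <;> simp
  | false =>
    by_cases hp : p.val < m1
    · cases bl with
      | false =>
        simp only [xel, if_pos hp, Yop, cY]
        rcases eq_or_ne q p with rfl | hqp
        · rw [if_pos hp, if_pos rfl, LinearMap.add_apply, S.bD2φ, S.D2h_bas0,
            add_zero, Algebra.smul_def]
        · rw [if_neg (show ((q, false) : Fin m × Bool) ≠ (p, false) by simp [hqp])]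
          split_ifs with hq
          · rw [LinearMap.add_apply, S.bD2φ, (S.hker p hp q hqp).2, S.D2h_bas0]
            simp
          · exact S.D2h_bas0 q (S.σ p)
      | true =>
        simp only [xel, if_pos hp, Yop]
        have hne : ((q, true) : Fin m × Bool) ≠ (p, false) := by simp
        rw [if_neg hne]
        split_ifs with h
        · simp
        · have hqp : q ≠ p := by
            intro e; exact h (e ▸ hp)
          rw [S.bD2φ, (S.hker p hp q hqp).2, zero_smul]
    · simp only [xel, if_neg hp, cY, S.Yop_one]
      split_ifs with h
      · simp
      · rfl

/-- The derivation ("Poisson") part of the bracket. -/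
noncomputable def P (u v : HAlg F Γ m) : HAlg F Γ m :=
  ∑ k : Fin m × Bool, S.xel k * (S.Xop k u * S.Yop k v - S.Yop k u * S.Xop k v)

lemma P_jacobi (u v w : HAlg F Γ m) :
    S.P (S.P u v) w + S.P (S.P v w) u + S.P (S.P w u) v = 0 :=
  abstract_jacobi (fun k => (S.Xop k).toAddMonoidHom) (fun k => (S.Yop k).toAddMonoidHom)
    S.xel S.cX S.cY (fun k a b => S.Xop_mul k a b) (fun k a b => S.Yop_mul k a b)
    (fun k l a => S.comm_XX k l a) (fun k l a => S.comm_XY k l a)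
    (fun k l a => S.comm_YY k l a) (fun k l => S.Xop_xel k l) (fun k l => S.Yop_xel k l)
    u v w S.P (fun a b => rfl)

lemma P_zero_left (v : HAlg F Γ m) : S.P 0 v = 0 := by
  simp [P]

lemma P_add_left (u u' v : HAlg F Γ m) : S.P (u + u') v = S.P u v + S.P u' v := by
  rw [P, P, P, ← Finset.sum_add_distrib]
  refine Finset.sum_congr rfl fun k _ => ?_
  simp only [map_add]
  ring

lemma P_smul_left (c : F) (u v : HAlg F Γ m) : S.P (c • u) v = c • S.P u v := by
  rw [P, P, Finset.smul_sum]
  refine Finset.sum_congr rfl fun k _ => ?_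
  simp only [map_smul, smul_mul_assoc, ← smul_sub, mul_smul_comm]

lemma P_skew (u v : HAlg F Γ m) : S.P u v = - S.P v u := by
  rw [P, P, ← Finset.sum_neg_distrib]
  refine Finset.sum_congr rfl fun k _ => ?_
  ring

lemma P_mul_left (a b v : HAlg F Γ m) : S.P (a * b) v = a * S.P b v + b * S.P a v := by
  rw [P, P, P, Finset.mul_sum, Finset.mul_sum, ← Finset.sum_add_distrib]
  refine Finset.sum_congr rfl fun k _ => ?_
  rw [S.Xop_mul, S.Yop_mul]
  ring

lemma br_single (g h : HIndex Γ m) :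
    S.br (bas F g) (bas F h)
      = S.P (bas F g) (bas F h) + S.φhat g.1 h.1 • (bas F g * bas F h) := by
  rw [show bas F g = AddMonoidAlgebra.single g (1 : F) from rfl,
    show bas F h = AddMonoidAlgebra.single h (1 : F) from rfl, S.hbr g h]
  congr 1
  rw [P, Fintype.sum_prod_type]
  refine Finset.sum_congr rfl fun p _ => ?_
  rw [Fintype.sum_bool]
  by_cases hp : p.val < m1
  · rw [if_pos hp]
    simp only [Xop, Yop, xel, if_pos hp, LinearMap.zero_apply, zero_mul, mul_zero,
      sub_zero, one_mul, mul_zero, zero_add, bas]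
    rfl
  · rw [if_neg hp]
    simp only [Xop, Yop, xel, if_neg hp, one_mul, bas]
    ring

lemma φhat_zero_left (t : Γ) : S.φhat 0 t = 0 := by
  have h := S.haddl 0 0 t
  rw [add_zero] at h
  simpa using h

/-- homogeneous components -/
def degSet (F : Type*) [Field F] {Γ : Type*} [AddCommGroup Γ] {m : ℕ} (α : Γ) :
    Set (HAlg F Γ m) :=
  Set.range fun xy : (Fin m → ℕ) × (Fin m → ℕ) => bas F ((α, xy) : HIndex Γ m)

/-- elements whose degrees pair like `δ` under `φhat` -/
def goodSet (δ : Γ) : Set (HAlg F Γ m) :=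
  {z | ∃ g' : HIndex Γ m, (∀ t, S.φhat g'.1 t = S.φhat δ t) ∧ z = bas F g'}

lemma Xop_bas_mem (k) (g : HIndex Γ m) :
    S.Xop k (bas F g) ∈ Submodule.span F (degSet F (m := m) g.1) := by
  obtain ⟨α, i, j⟩ := g
  have mφ : ∀ p, S.D1φ p (bas F ((α, (i, j)) : HIndex Γ m)) ∈
      Submodule.span F (degSet F (m := m) α) := fun p => by
    rw [S.bD1φ]
    exact Submodule.smul_mem _ _ (Submodule.subset_span ⟨(i, j), rfl⟩)
  have mh : ∀ p, S.D1h p (bas F ((α, (i, j)) : HIndex Γ m)) ∈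
      Submodule.span F (degSet F (m := m) α) := fun p => by
    rw [S.bD1h]
    exact Submodule.smul_mem _ _
      (Submodule.subset_span ⟨((fun r => i r - (if r = p then 1 else 0)), j), rfl⟩)
  rcases k with ⟨p, _ | _⟩ <;> simp only [Xop, LinearMap.add_apply]
  · exact Submodule.add_mem _ (mφ p) (mh p)
  · split_ifs
    · simp only [LinearMap.zero_apply]
      exact Submodule.zero_mem _
    · exact mh p

lemma Yop_bas_mem (k) (g : HIndex Γ m) :
    S.Yop k (bas F g) ∈ Submodule.span F (degSet F (m := m) g.1) := by
  obtain ⟨α, i, j⟩ := g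
  have mφ : ∀ p, S.D2φ p (bas F ((α, (i, j)) : HIndex Γ m)) ∈
      Submodule.span F (degSet F (m := m) α) := fun p => by
    rw [S.bD2φ]
    exact Submodule.smul_mem _ _ (Submodule.subset_span ⟨(i, j), rfl⟩)
  have mh : ∀ p, S.D2h p (bas F ((α, (i, j)) : HIndex Γ m)) ∈
      Submodule.span F (degSet F (m := m) α) := fun p => by
    rw [S.bD2h]
    exact Submodule.smul_mem _ _
      (Submodule.subset_span ⟨(i, (fun r => j r - (if r = p then 1 else 0))), rfl⟩)
  rcases k with ⟨p, _ | _⟩ <;> simp only [Yop, LinearMap.add_apply]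
  · split_ifs
    · simp only [LinearMap.add_apply]
      exact Submodule.add_mem _ (mφ p) (mh p)
    · exact mh p
  · split_ifs
    · simp only [LinearMap.zero_apply]
      exact Submodule.zero_mem _
    · exact mφ p

lemma good_mul (τ α β : Γ) (hτ : ∀ t, S.φhat τ t = 0) :
    ∀ z1 ∈ Submodule.span F (degSet F (m := m) α),
      ∀ z2 ∈ Submodule.span F (degSet F (m := m) β),
      bas F ((τ, (0, 0)) : HIndex Γ m) * (z1 * z2) ∈
        Submodule.span F (S.goodSet (α + β)) := by
  intro z1 h1
  induction h1 using Submodule.span_induction with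
  | mem x hx =>
    intro z2 h2
    induction h2 using Submodule.span_induction with
    | mem y hy =>
      obtain ⟨xy, rfl⟩ := hx
      obtain ⟨xy', rfl⟩ := hy
      rw [bas_mul, bas_mul]
      refine Submodule.subset_span ⟨_, fun t => ?_, rfl⟩
      show S.φhat (τ + (α + β)) t = S.φhat (α + β) t
      rw [S.haddl, hτ, zero_add]
    | zero => simp
    | add y y' hy hy' ihy ihy' =>
      rw [mul_add, mul_add]
      exact Submodule.add_mem _ ihy ihy'
    | smul c y hy ihy =>
      rw [mul_smul_comm, mul_smul_comm]
      exact Submodule.smul_mem _ _ ihy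
  | zero => intro z2 h2; simp
  | add y y' hy hy' ihy ihy' =>
    intro z2 h2
    rw [add_mul, mul_add]
    exact Submodule.add_mem _ (ihy z2 h2) (ihy' z2 h2)
  | smul c y hy ihy =>
    intro z2 h2
    rw [smul_mul_assoc, mul_smul_comm]
    exact Submodule.smul_mem _ _ (ihy z2 h2)

lemma xel_form (k) : ∃ τ : Γ, S.xel k = bas F ((τ, (0, 0)) : HIndex Γ m)
    ∧ ∀ t, S.φhat τ t = 0 := by
  rcases k with ⟨p, _ | _⟩ <;> simp only [xel]
  · split_ifs with hp
    · exact ⟨S.σ p, rfl, S.hrad p hp⟩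
    · exact ⟨0, rfl, S.φhat_zero_left⟩
  · exact ⟨0, rfl, S.φhat_zero_left⟩

lemma P_bas_mem (g h : HIndex Γ m) :
    S.P (bas F g) (bas F h) ∈ Submodule.span F (S.goodSet (g.1 + h.1)) := by
  refine Submodule.sum_mem _ fun k _ => ?_
  obtain ⟨τ, hx, hτ⟩ := S.xel_form k
  rw [hx, mul_sub]
  exact Submodule.sub_mem _
    (S.good_mul τ g.1 h.1 hτ _ (S.Xop_bas_mem k g) _ (S.Yop_bas_mem k h))
    (S.good_mul τ g.1 h.1 hτ _ (S.Yop_bas_mem k g) _ (S.Xop_bas_mem k h))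

lemma br_good (δ : Γ) (e : HIndex Γ m) :
    ∀ z ∈ Submodule.span F (S.goodSet δ),
      S.br z (bas F e) = S.P z (bas F e) + S.φhat δ e.1 • (z * bas F e) := by
  intro z hz
  induction hz using Submodule.span_induction with
  | mem x hx =>
    obtain ⟨g', hg', rfl⟩ := hx
    rw [S.br_single, hg' e.1]
  | zero =>
    rw [map_zero, LinearMap.zero_apply, S.P_zero_left, zero_mul, smul_zero, add_zero]
  | add y y' hy hy' ihy ihy' =>
    rw [map_add, LinearMap.add_apply, ihy, ihy', S.P_add_left, add_mul, smul_add]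
    abel
  | smul c y hy ihy =>
    rw [map_smul, LinearMap.smul_apply, ihy, S.P_smul_left, smul_add, smul_mul_assoc,
      smul_comm c]

lemma br_P_single (g h e : HIndex Γ m) :
    S.br (S.P (bas F g) (bas F h)) (bas F e)
      = S.P (S.P (bas F g) (bas F h)) (bas F e)
        + S.φhat (g.1 + h.1) e.1 • (S.P (bas F g) (bas F h) * bas F e) :=
  S.br_good _ e _ (S.P_bas_mem g h)

lemma jacobi_single (g h e : HIndex Γ m) :
    S.br (S.br (bas F g) (bas F h)) (bas F e)
      + S.br (S.br (bas F h) (bas F e)) (bas F g)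
      + S.br (S.br (bas F e) (bas F g)) (bas F h) = 0 := by
  have hJ := S.P_jacobi (bas F g) (bas F h) (bas F e)
  rw [S.br_single g h, S.br_single h e, S.br_single e g]
  rw [map_add, map_add, map_add, LinearMap.add_apply, LinearMap.add_apply,
    LinearMap.add_apply, map_smul, map_smul, map_smul, LinearMap.smul_apply,
    LinearMap.smul_apply, LinearMap.smul_apply]
  rw [S.br_P_single g h e, S.br_P_single h e g, S.br_P_single e g h]
  rw [bas_mul g h, bas_mul h e, bas_mul e g]
  rw [S.br_single (g + h) e, S.br_single (h + e) g, S.br_single (e + g) h]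
  rw [← bas_mul g h, ← bas_mul h e, ← bas_mul e g]
  rw [S.P_mul_left, S.P_mul_left, S.P_mul_left]
  simp only [Prod.fst_add, S.haddl]
  rw [S.hskew g.1 e.1, S.hskew h.1 g.1, S.hskew e.1 h.1]
  rw [S.P_skew (bas F g) (bas F e), S.P_skew (bas F h) (bas F g),
    S.P_skew (bas F e) (bas F h)]
  simp only [Algebra.smul_def, map_add, map_neg, mul_neg, neg_mul]
  linear_combination hJ

lemma jacobi (u v w : HAlg F Γ m) :
    S.br (S.br u v) w + S.br (S.br v w) u + S.br (S.br w u) v = 0 := by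
  induction u using AddMonoidAlgebra.induction_on with
  | of g =>
    induction v using AddMonoidAlgebra.induction_on with
    | of g' =>
      induction w using AddMonoidAlgebra.induction_on with
      | of g'' =>
        simpa only [AddMonoidAlgebra.of_apply, toAdd_ofAdd, bas] using
          S.jacobi_single g g' g''
      | add f f' hf hf' =>
        simp only [map_add, LinearMap.add_apply]
        linear_combination hf + hf'
      | smul c f hf =>
        simp only [map_smul, LinearMap.smul_apply, ← smul_add, hf, smul_zero]
    | add f f' hf hf' =>
      simp only [map_add, LinearMap.add_apply]
      linear_combination hf + hf'
    | smul c f hf =>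
      simp only [map_smul, LinearMap.smul_apply, ← smul_add, hf, smul_zero]
  | add f f' hf hf' =>
    simp only [map_add, LinearMap.add_apply]
    linear_combination hf + hf'
  | smul c f hf =>
    simp only [map_smul, LinearMap.smul_apply, ← smul_add, hf, smul_zero]

lemma skew_single (g h : HIndex Γ m) :
    S.br (bas F g) (bas F h) = - S.br (bas F h) (bas F g) := by
  rw [S.br_single g h, S.br_single h g, S.P_skew (bas F g) (bas F h),
    S.hskew g.1 h.1, mul_comm (bas F g) (bas F h)]
  module

lemma skew (u v : HAlg F Γ m) : S.br u v = - S.br v u := by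
  induction u using AddMonoidAlgebra.induction_on with
  | of g =>
    induction v using AddMonoidAlgebra.induction_on with
    | of g' =>
      simpa only [AddMonoidAlgebra.of_apply, toAdd_ofAdd, bas] using S.skew_single g g'
    | add f f' hf hf' =>
      simp only [map_add, LinearMap.add_apply, hf, hf']
      abel
    | smul c f hf =>
      simp only [map_smul, LinearMap.smul_apply, hf, smul_neg]
  | add f f' hf hf' =>
    simp only [map_add, LinearMap.add_apply, hf, hf']
    abel
  | smul c f hf =>
    simp only [map_smul, LinearMap.smul_apply, hf, smul_neg]

lemma central (v : HAlg F Γ m) :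
    S.br (AddMonoidAlgebra.single (0 : HIndex Γ m) 1) v = 0 := by
  induction v using AddMonoidAlgebra.induction_on with
  | of g =>
    rw [AddMonoidAlgebra.of_apply, toAdd_ofAdd, S.hbr 0 g]
    have h1 : (AddMonoidAlgebra.single (0 : HIndex Γ m) (1 : F)) = (1 : HAlg F Γ m) := rfl
    simp only [h1, LinearMap.add_apply, S.D1φ_one, S.D1h_one, S.D2φ_one, S.D2h_one,
      add_zero, zero_mul, mul_zero, zero_add, sub_zero, zero_sub, neg_zero, sub_self,
      Prod.fst_zero, S.φhat_zero_left, zero_smul, ite_self, Finset.sum_const_zero]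
  | add f f' hf hf' =>
    simp only [map_add, hf, hf', add_zero]
  | smul c f hf =>
    simp only [map_smul, hf, smul_zero]

end HData

/-- The type-H bracket (4.12) is skew-symmetric, satisfies the Jacobi identity, and the
identity element `1 = x^{0,0⃗}` is central. Here `φ1 p`, `φ2 p` play the roles of
`φₚ`, `φ_{m+p}`, the pair `(i,j)` records the exponents `i⃗` at positions `1..m` and
`m+1..2m`, and `m₁ ≤ m` splits the two kinds of summands of (4.12). -/
theorem type_H_bracket_is_lie_algebra
    {F Γ : Type*} [Field F] [AddCommGroup Γ] (m m1 : ℕ) (hm1 : m1 ≤ m)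
    (φ1 φ2 : Fin m → (Γ →+ F)) (φhat : Γ → Γ → F)
    (hskew : ∀ α β, φhat α β = - φhat β α)
    (haddl : ∀ α β γ, φhat (α + β) γ = φhat α γ + φhat β γ)
    (haddr : ∀ α β γ, φhat α (β + γ) = φhat α β + φhat α γ)
    (σ : Fin m → Γ)
    (hrad : ∀ p : Fin m, p.val < m1 → ∀ β, φhat (σ p) β = 0)
    (hker : ∀ p : Fin m, p.val < m1 → ∀ q : Fin m, q ≠ p →
      φ1 q (σ p) = 0 ∧ φ2 q (σ p) = 0)
    (D1φ D1h D2φ D2h : Fin m → Module.End F (HAlg F Γ m))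
    (hD1φ : ∀ p (α : Γ) (i j : Fin m → ℕ),
      D1φ p (AddMonoidAlgebra.single (α, (i, j)) 1)
        = φ1 p α • AddMonoidAlgebra.single (α, (i, j)) 1)
    (hD1h : ∀ p (α : Γ) (i j : Fin m → ℕ),
      D1h p (AddMonoidAlgebra.single (α, (i, j)) 1)
        = (i p : F) •
            AddMonoidAlgebra.single (α, (fun r => i r - (if r = p then 1 else 0), j)) 1)
    (hD2φ : ∀ p (α : Γ) (i j : Fin m → ℕ),
      D2φ p (AddMonoidAlgebra.single (α, (i, j)) 1)
        = φ2 p α • AddMonoidAlgebra.single (α, (i, j)) 1)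
    (hD2h : ∀ p (α : Γ) (i j : Fin m → ℕ),
      D2h p (AddMonoidAlgebra.single (α, (i, j)) 1)
        = (j p : F) •
            AddMonoidAlgebra.single (α, (i, fun r => j r - (if r = p then 1 else 0))) 1)
    (br : HAlg F Γ m →ₗ[F] HAlg F Γ m →ₗ[F] HAlg F Γ m)
    (hbr : ∀ g h : HIndex Γ m,
      br (AddMonoidAlgebra.single g 1) (AddMonoidAlgebra.single h 1)
        = (∑ p : Fin m,
            if p.val < m1 then
              AddMonoidAlgebra.single ((σ p, 0) : HIndex Γ m) 1 *
                (((D1φ p + D1h p) (AddMonoidAlgebra.single g 1)) *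
                    ((D2φ p + D2h p) (AddMonoidAlgebra.single h 1))
                  - ((D2φ p + D2h p) (AddMonoidAlgebra.single g 1)) *
                    ((D1φ p + D1h p) (AddMonoidAlgebra.single h 1)))
            else
              ((D1φ p + D1h p) (AddMonoidAlgebra.single g 1)) *
                  (D2h p (AddMonoidAlgebra.single h 1))
                + (D1h p (AddMonoidAlgebra.single g 1)) *
                  (D2φ p (AddMonoidAlgebra.single h 1))
                - (D2h p (AddMonoidAlgebra.single g 1)) *
                  ((D1φ p + D1h p) (AddMonoidAlgebra.single h 1))
                - (D2φ p (AddMonoidAlgebra.single g 1)) *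
                  (D1h p (AddMonoidAlgebra.single h 1)))
          + φhat g.1 h.1 •
              (AddMonoidAlgebra.single g 1 * AddMonoidAlgebra.single h 1)) :
    (∀ u v, br u v = - br v u) ∧
    (∀ u v w, br (br u v) w + br (br v w) u + br (br w u) v = 0) ∧
    (∀ v, br (AddMonoidAlgebra.single (0 : HIndex Γ m) 1) v = 0) := by
  let S : HData F Γ m m1 :=
    { φ1 := φ1, φ2 := φ2, φhat := φhat, hskew := hskew, haddl := haddl, haddr := haddr,
      σ := σ, hrad := hrad, hker := hker,
      D1φ := D1φ, D1h := D1h, D2φ := D2φ, D2h := D2h,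
      hD1φ := hD1φ, hD1h := hD1h, hD2φ := hD2φ, hD2h := hD2h,
      br := br, hbr := hbr }
  exact ⟨fun u v => S.skew u v, fun u v w => S.jacobi u v w, fun v => S.central v⟩
end

section
/- Let n = 2m+1, and let A be the space with basis {x^{α,i⃗}} equipped with the type-K bracket [u,v]_K = Σ_{p=1}^{m} x₁^{σₚ}(∂ₚ(u)∂_{p'}(v) − ∂_{p'}(u)∂ₚ(v)) + x₁^{σₙ}[(2−∂)(u)∂ₙ(v) − ∂ₙ(u)(2−∂)(v)], where ∂(x^{α,i⃗}) = (Σ_{p∈℧₁} φₚ(α) + Σ_{q∈℧₂} i_q) x^{α,i⃗}. Then (A, [·,·]_K) is a Lie algebra. -/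
open scoped Classical

/-- Exponent monoid for the type-K construction (`n = 2m+1`): `Γ × ((ℕᵐ × ℕᵐ) × ℕ)`, the two
copies of `ℕᵐ` recording the exponents at positions `1..m` and `m+1..2m`, and the last `ℕ`
the exponent at position `n`. -/
abbrev KIndex (Γ : Type*) (m : ℕ) : Type _ := Γ × (((Fin m → ℕ) × (Fin m → ℕ)) × ℕ)

/-- The underlying space `A` of the type-K construction. -/
abbrev KAlg (F Γ : Type*) [Field F] [AddCommGroup Γ] (m : ℕ) : Type _ :=
  AddMonoidAlgebra F (KIndex Γ m)

section Auxiliary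

namespace KProofAux
open AddMonoidAlgebra

variable {F : Type*} [Field F] {M : Type*} [AddCommMonoid M]

lemma single_eq_smul (a : M) (b : F) :
    (single a b : AddMonoidAlgebra F M) = b • single a 1 := by
  rw [smul_single', mul_one]

lemma endo_ext {T S : Module.End F (AddMonoidAlgebra F M)}
    (h : ∀ g : M, T (single g 1) = S (single g 1)) : T = S := by
  apply AddMonoidAlgebra.lhom_ext'
  intro x; apply LinearMap.ext; intro b
  simp only [LinearMap.comp_apply, AddMonoidAlgebra.lsingle_apply]
  rw [single_eq_smul x b, map_smul, map_smul, h x]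

lemma endo_ext_apply {T S : Module.End F (AddMonoidAlgebra F M)}
    (h : ∀ g : M, T (single g 1) = S (single g 1)) (u : AddMonoidAlgebra F M) :
    T u = S u := by rw [endo_ext h]

lemma leibniz_of_basis {T : Module.End F (AddMonoidAlgebra F M)}
    (h : ∀ g g' : M, T (single g 1 * single g' 1)
      = T (single g 1) * single g' 1 + single g 1 * T (single g' 1))
    (u v : AddMonoidAlgebra F M) : T (u * v) = T u * v + u * T v := by
  have key : (LinearMap.mul F (AddMonoidAlgebra F M)).compr₂ T
      = (LinearMap.mul F (AddMonoidAlgebra F M)).compl₁₂ T LinearMap.id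
        + (LinearMap.mul F (AddMonoidAlgebra F M)).compl₁₂ LinearMap.id T := by
    apply AddMonoidAlgebra.lhom_ext'; intro a
    apply LinearMap.ext; intro b
    apply AddMonoidAlgebra.lhom_ext'; intro a'
    apply LinearMap.ext; intro b'
    simp only [LinearMap.comp_apply, AddMonoidAlgebra.lsingle_apply,
      LinearMap.compr₂_apply, LinearMap.mul_apply', LinearMap.add_apply,
      LinearMap.compl₁₂_apply, LinearMap.id_apply]
    rw [single_eq_smul a b, single_eq_smul a' b']
    simp only [map_smul, LinearMap.smul_apply, smul_mul_assoc, mul_smul_comm, smul_add]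
    rw [h a a']
    simp only [smul_add, mul_smul_comm, smul_mul_assoc]
  have := LinearMap.congr_fun (LinearMap.congr_fun key u) v
  simpa using this



variable {R : Type*} [CommRing R] {m : ℕ}

/-- The family of elementary brackets indexed by `Option (Fin m)`. -/
def bbDef (X Y : Fin m → R → R) (N D : R → R) (s : Fin m → R) (t : R) :
    Option (Fin m) → R → R → R
  | some p => fun x y => s p * (X p x * Y p y - Y p x * X p y)
  | none => fun x y => t * ((2*x - D x) * N y - N x * (2*y - D y))

lemma diag_some_core' (X Y : R → R) (s a b : R)
    (hXm : ∀ x y, X (x * y) = X x * y + x * X y)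
    (hYm : ∀ x y, Y (x * y) = Y x * y + x * Y y)
    (hXs : ∀ x y, X (x - y) = X x - X y)
    (hYs : ∀ x y, Y (x - y) = Y x - Y y)
    (hXv : X s = a * s) (hYv : Y s = b * s)
    (hc : ∀ x, Y (X x) = X (Y x)) (u v w : R) :
    (s * (X (s * (X u * Y v - Y u * X v)) * Y w - Y (s * (X u * Y v - Y u * X v)) * X w))
      + (s * (X (s * (X v * Y w - Y v * X w)) * Y u - Y (s * (X v * Y w - Y v * X w)) * X u))
      + (s * (X (s * (X w * Y u - Y w * X u)) * Y v - Y (s * (X w * Y u - Y w * X u)) * X v))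
      = 0 := by
  simp only [hXs, hYs, hXm, hYm, hXv, hYv, hc]
  ring

lemma mixed_some_some_core' (X1 Y1 X2 Y2 : R → R) (s1 s2 a1 b1 a2 b2 : R)
    (hX1m : ∀ x y, X1 (x * y) = X1 x * y + x * X1 y)
    (hY1m : ∀ x y, Y1 (x * y) = Y1 x * y + x * Y1 y)
    (hX2m : ∀ x y, X2 (x * y) = X2 x * y + x * X2 y)
    (hY2m : ∀ x y, Y2 (x * y) = Y2 x * y + x * Y2 y)
    (hX1s : ∀ x y, X1 (x - y) = X1 x - X1 y)
    (hY1s : ∀ x y, Y1 (x - y) = Y1 x - Y1 y)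
    (hX2s : ∀ x y, X2 (x - y) = X2 x - X2 y)
    (hY2s : ∀ x y, Y2 (x - y) = Y2 x - Y2 y)
    (hX1v1 : X1 s1 = a1 * s1) (hY1v1 : Y1 s1 = b1 * s1)
    (hX2v2 : X2 s2 = a2 * s2) (hY2v2 : Y2 s2 = b2 * s2)
    (hX1v2 : X1 s2 = 0) (hY1v2 : Y1 s2 = 0)
    (hX2v1 : X2 s1 = 0) (hY2v1 : Y2 s1 = 0)
    (c1 : ∀ x, Y1 (X1 x) = X1 (Y1 x))
    (c2 : ∀ x, X2 (X1 x) = X1 (X2 x))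
    (c3 : ∀ x, X2 (Y1 x) = Y1 (X2 x))
    (c4 : ∀ x, Y2 (X1 x) = X1 (Y2 x))
    (c5 : ∀ x, Y2 (Y1 x) = Y1 (Y2 x))
    (c6 : ∀ x, Y2 (X2 x) = X2 (Y2 x))
    (u v w : R) :
    ((s1 * (X1 (s2 * (X2 u * Y2 v - Y2 u * X2 v)) * Y1 w - Y1 (s2 * (X2 u * Y2 v - Y2 u * X2 v)) * X1 w))
      + (s1 * (X1 (s2 * (X2 v * Y2 w - Y2 v * X2 w)) * Y1 u - Y1 (s2 * (X2 v * Y2 w - Y2 v * X2 w)) * X1 u))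
      + (s1 * (X1 (s2 * (X2 w * Y2 u - Y2 w * X2 u)) * Y1 v - Y1 (s2 * (X2 w * Y2 u - Y2 w * X2 u)) * X1 v)))
    + ((s2 * (X2 (s1 * (X1 u * Y1 v - Y1 u * X1 v)) * Y2 w - Y2 (s1 * (X1 u * Y1 v - Y1 u * X1 v)) * X2 w))
      + (s2 * (X2 (s1 * (X1 v * Y1 w - Y1 v * X1 w)) * Y2 u - Y2 (s1 * (X1 v * Y1 w - Y1 v * X1 w)) * X2 u))
      + (s2 * (X2 (s1 * (X1 w * Y1 u - Y1 w * X1 u)) * Y2 v - Y2 (s1 * (X1 w * Y1 u - Y1 w * X1 u)) * X2 v)))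
      = 0 := by
  simp only [hX1s, hY1s, hX2s, hY2s, hX1m, hY1m, hX2m, hY2m,
    hX1v1, hY1v1, hX2v2, hY2v2, hX1v2, hY1v2, hX2v1, hY2v1, c1, c2, c3, c4, c5, c6]
  ring

lemma diag_none_core' (N D : R → R) (t c : R)
    (hNm : ∀ x y, N (x * y) = N x * y + x * N y)
    (hDm : ∀ x y, D (x * y) = D x * y + x * D y)
    (hNs : ∀ x y, N (x - y) = N x - N y)
    (hDs : ∀ x y, D (x - y) = D x - D y)
    (hN2 : N 2 = 0) (hD2 : D 2 = 0)
    (hNt : N t = c * t) (hDt : D t = 0)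
    (hND : ∀ x, D (N x) = N (D x))
    (u v w : R) :
    (t * ((2 * (t * ((2*u - D u) * N v - N u * (2*v - D v)))
            - D (t * ((2*u - D u) * N v - N u * (2*v - D v)))) * N w
          - N (t * ((2*u - D u) * N v - N u * (2*v - D v))) * (2*w - D w)))
    + (t * ((2 * (t * ((2*v - D v) * N w - N v * (2*w - D w)))
            - D (t * ((2*v - D v) * N w - N v * (2*w - D w)))) * N u
          - N (t * ((2*v - D v) * N w - N v * (2*w - D w))) * (2*u - D u)))
    + (t * ((2 * (t * ((2*w - D w) * N u - N w * (2*u - D u)))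
            - D (t * ((2*w - D w) * N u - N w * (2*u - D u)))) * N v
          - N (t * ((2*w - D w) * N u - N w * (2*u - D u))) * (2*v - D v)))
      = 0 := by
  simp only [hNs, hDs, hNm, hDm, hN2, hD2, hNt, hDt, hND]
  ring

lemma mixed_some_none_core' (X Y N D : R → R) (s t a b c : R)
    (hXm : ∀ x y, X (x * y) = X x * y + x * X y)
    (hYm : ∀ x y, Y (x * y) = Y x * y + x * Y y)
    (hNm : ∀ x y, N (x * y) = N x * y + x * N y)
    (hDm : ∀ x y, D (x * y) = D x * y + x * D y)
    (hXs : ∀ x y, X (x - y) = X x - X y)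
    (hYs : ∀ x y, Y (x - y) = Y x - Y y)
    (hNs : ∀ x y, N (x - y) = N x - N y)
    (hDs : ∀ x y, D (x - y) = D x - D y)
    (hX2 : X 2 = 0) (hY2 : Y 2 = 0) (hN2 : N 2 = 0) (hD2 : D 2 = 0)
    (hXv : X s = a * s) (hYv : Y s = b * s) (hNv : N s = 0) (hDv : D s = (a + b) * s)
    (hXt : X t = 0) (hYt : Y t = 0) (hNt : N t = c * t) (hDt : D t = 0)
    (cXY : ∀ x, Y (X x) = X (Y x))
    (cXN : ∀ x, N (X x) = X (N x))
    (cYN : ∀ x, N (Y x) = Y (N x))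
    (cXD : ∀ x, D (X x) = X (D x) - (1 + a) * X x)
    (cYD : ∀ x, D (Y x) = Y (D x) - (1 + b) * Y x)
    (cND : ∀ x, D (N x) = N (D x))
    (u v w : R) :
    ((s * (X (t * ((2*u - D u) * N v - N u * (2*v - D v))) * Y w
          - Y (t * ((2*u - D u) * N v - N u * (2*v - D v))) * X w))
      + (s * (X (t * ((2*v - D v) * N w - N v * (2*w - D w))) * Y u
          - Y (t * ((2*v - D v) * N w - N v * (2*w - D w))) * X u))
      + (s * (X (t * ((2*w - D w) * N u - N w * (2*u - D u))) * Y v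
          - Y (t * ((2*w - D w) * N u - N w * (2*u - D u))) * X v)))
    + ((t * ((2 * (s * (X u * Y v - Y u * X v)) - D (s * (X u * Y v - Y u * X v))) * N w
          - N (s * (X u * Y v - Y u * X v)) * (2*w - D w)))
      + (t * ((2 * (s * (X v * Y w - Y v * X w)) - D (s * (X v * Y w - Y v * X w))) * N u
          - N (s * (X v * Y w - Y v * X w)) * (2*u - D u)))
      + (t * ((2 * (s * (X w * Y u - Y w * X u)) - D (s * (X w * Y u - Y w * X u))) * N v
          - N (s * (X w * Y u - Y w * X u)) * (2*v - D v))))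
      = 0 := by
  simp only [hXs, hYs, hNs, hDs, hXm, hYm, hNm, hDm, hX2, hY2, hN2, hD2,
    hXv, hYv, hNv, hDv, hXt, hYt, hNt, hDt, cXY, cXN, cYN, cXD, cYD, cND]
  ring

set_option maxHeartbeats 1000000 in
lemma jacobi_master (B : R → R → R) (X Y : Fin m → R → R) (N D : R → R)
    (s : Fin m → R) (t : R) (a b : Fin m → R) (c : R)
    (hXa : ∀ p x y, X p (x + y) = X p x + X p y)
    (hYa : ∀ p x y, Y p (x + y) = Y p x + Y p y)
    (hNa : ∀ x y, N (x + y) = N x + N y)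
    (hDa : ∀ x y, D (x + y) = D x + D y)
    (hXsub : ∀ p x y, X p (x - y) = X p x - X p y)
    (hYsub : ∀ p x y, Y p (x - y) = Y p x - Y p y)
    (hNsub : ∀ x y, N (x - y) = N x - N y)
    (hDsub : ∀ x y, D (x - y) = D x - D y)
    (hXm : ∀ p x y, X p (x * y) = X p x * y + x * X p y)
    (hYm : ∀ p x y, Y p (x * y) = Y p x * y + x * Y p y)
    (hNm : ∀ x y, N (x * y) = N x * y + x * N y)
    (hDm : ∀ x y, D (x * y) = D x * y + x * D y)
    (hX2 : ∀ p, X p 2 = 0) (hY2 : ∀ p, Y p 2 = 0) (hN2 : N 2 = 0) (hD2 : D 2 = 0)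
    (cXX : ∀ p q x, X p (X q x) = X q (X p x))
    (cYY : ∀ p q x, Y p (Y q x) = Y q (Y p x))
    (cXY : ∀ p q x, Y q (X p x) = X p (Y q x))
    (cXN : ∀ p x, N (X p x) = X p (N x))
    (cYN : ∀ p x, N (Y p x) = Y p (N x))
    (cND : ∀ x, D (N x) = N (D x))
    (cXD : ∀ p x, D (X p x) = X p (D x) - (1 + a p) * X p x)
    (cYD : ∀ p x, D (Y p x) = Y p (D x) - (1 + b p) * Y p x)
    (hXs : ∀ q p, X q (s p) = (if q = p then a p else 0) * s p)
    (hYs : ∀ q p, Y q (s p) = (if q = p then b p else 0) * s p)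
    (hNs : ∀ p, N (s p) = 0)
    (hDs : ∀ p, D (s p) = (a p + b p) * s p)
    (hXt : ∀ p, X p t = 0) (hYt : ∀ p, Y p t = 0) (hNt : N t = c * t) (hDt : D t = 0)
    (hB : ∀ u v, B u v = (∑ p, s p * (X p u * Y p v - Y p u * X p v))
        + t * ((2*u - D u) * N v - N u * (2*v - D v)))
    (u v w : R) :
    B (B u v) w + B (B v w) u + B (B w u) v = 0 := by
  classical
  set bb := bbDef X Y N D s t with hbbdef
  have hBo : ∀ x y, B x y = ∑ o : Option (Fin m), bb o x y := by
    intro x y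
    rw [hB, Fintype.sum_option]
    simp only [hbbdef, bbDef]
    ring
  have hadd : ∀ o x y z, bb o (x + y) z = bb o x z + bb o y z := by
    rintro (_ | p) x y z <;> simp only [hbbdef, bbDef, hXa, hYa, hNa, hDa] <;> ring
  have hsum : ∀ o z (f : Option (Fin m) → R),
      bb o (∑ r : Option (Fin m), f r) z = ∑ r : Option (Fin m), bb o (f r) z := by
    intro o z f
    exact map_sum (AddMonoidHom.mk' (fun x => bb o x z) (fun x y => hadd o x y z)) f Finset.univ
  have step : ∀ x y z : R, B (B x y) z = ∑ q : Option (Fin m), ∑ r : Option (Fin m),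
      bb q (bb r x y) z := by
    intro x y z
    rw [hBo (B x y) z]
    refine Finset.sum_congr rfl fun q _ => ?_
    rw [hBo x y, hsum]
  rw [step u v w, step v w u, step w u v]
  rw [← Finset.sum_add_distrib, ← Finset.sum_add_distrib]
  have : ∀ q : Option (Fin m),
      ((∑ r : Option (Fin m), bb q (bb r u v) w + ∑ r : Option (Fin m), bb q (bb r v w) u)
        + ∑ r : Option (Fin m), bb q (bb r w u) v)
      = ∑ r : Option (Fin m),
          (bb q (bb r u v) w + bb q (bb r v w) u + bb q (bb r w u) v) := by
    intro q
    rw [← Finset.sum_add_distrib, ← Finset.sum_add_distrib]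
  rw [Finset.sum_congr rfl (fun q _ => this q)]
  rw [← Finset.sum_product']
  have hdiag : ∀ q : Option (Fin m),
      bb q (bb q u v) w + bb q (bb q v w) u + bb q (bb q w u) v = 0 := by
    rintro (_ | p)
    · have := diag_none_core' N D t c hNm hDm hNsub hDsub hN2 hD2 hNt hDt cND u v w
      simpa [hbbdef, bbDef] using this
    · have := diag_some_core' (X p) (Y p) (s p) (a p) (b p) (hXm p) (hYm p)
        (hXsub p) (hYsub p) (by simpa using hXs p p) (by simpa using hYs p p)
        (fun x => cXY p p x) u v w
      simpa [hbbdef, bbDef] using this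
  have hpair : ∀ qr : Option (Fin m) × Option (Fin m),
      (bb qr.1 (bb qr.2 u v) w + bb qr.1 (bb qr.2 v w) u + bb qr.1 (bb qr.2 w u) v)
      + (bb qr.2 (bb qr.1 u v) w + bb qr.2 (bb qr.1 v w) u + bb qr.2 (bb qr.1 w u) v) = 0 := by
    rintro ⟨(_ | p), (_ | q)⟩
    · have := hdiag none
      simp only at this ⊢
      rw [this]; simp
    · have core := mixed_some_none_core' (X q) (Y q) N D (s q) t (a q) (b q) c
        (hXm q) (hYm q) hNm hDm (hXsub q) (hYsub q) hNsub hDsub (hX2 q) (hY2 q) hN2 hD2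
        (by simpa using hXs q q) (by simpa using hYs q q) (hNs q) (hDs q)
        (hXt q) (hYt q) hNt hDt (fun x => cXY q q x) (fun x => cXN q x) (fun x => cYN q x)
        (fun x => cXD q x) (fun x => cYD q x) cND u v w
      simp only [hbbdef, bbDef]
      linear_combination core
    · have core := mixed_some_none_core' (X p) (Y p) N D (s p) t (a p) (b p) c
        (hXm p) (hYm p) hNm hDm (hXsub p) (hYsub p) hNsub hDsub (hX2 p) (hY2 p) hN2 hD2
        (by simpa using hXs p p) (by simpa using hYs p p) (hNs p) (hDs p)
        (hXt p) (hYt p) hNt hDt (fun x => cXY p p x) (fun x => cXN p x) (fun x => cYN p x)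
        (fun x => cXD p x) (fun x => cYD p x) cND u v w
      simp only [hbbdef, bbDef]
      linear_combination core
    · rcases eq_or_ne p q with rfl | hpq
      · have := hdiag (some p)
        simp only at this ⊢
        rw [this]; simp
      · have core := mixed_some_some_core' (X p) (Y p) (X q) (Y q) (s p) (s q)
          (a p) (b p) (a q) (b q)
          (hXm p) (hYm p) (hXm q) (hYm q) (hXsub p) (hYsub p) (hXsub q) (hYsub q)
          (by simpa using hXs p p) (by simpa using hYs p p)
          (by simpa using hXs q q) (by simpa using hYs q q)
          (by simpa [hpq] using hXs p q) (by simpa [hpq] using hYs p q)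
          (by simpa [hpq.symm] using hXs q p) (by simpa [hpq.symm] using hYs q p)
          (fun x => cXY p p x) (fun x => (cXX p q x).symm) (fun x => (cXY q p x).symm)
          (fun x => cXY p q x) (fun x => (cYY p q x).symm) (fun x => cXY q q x)
          u v w
        simp only [hbbdef, bbDef]
        linear_combination core
  refine Finset.sum_ninvolution Prod.swap (fun qr => hpair qr) (fun qr hne hfix => ?_)
    (fun _ => by simp) (fun qr => Prod.swap_swap qr)
  apply hne
  obtain ⟨q, r⟩ := qr
  have h1 : r = q := congrArg Prod.fst hfix
  subst h1
  exact hdiag r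

end KProofAux

namespace KProof
open AddMonoidAlgebra KProofAux

variable {F Γ : Type*} [Field F] [AddCommGroup Γ] {m : ℕ}
variable {φ1 φ2 : Fin m → (Γ →+ F)} {φn : Γ →+ F} {σ : Fin m → Γ} {σn : Γ}
variable {D1 D2 : Fin m → Module.End F (KAlg F Γ m)} {Dn Del : Module.End F (KAlg F Γ m)}

lemma d1_leibniz (p : Fin m)
    (hD1 : ∀ p (α : Γ) (i j : Fin m → ℕ) (l : ℕ),
      D1 p (AddMonoidAlgebra.single (α, ((i, j), l)) 1)
        = φ1 p α • AddMonoidAlgebra.single (α, ((i, j), l)) 1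
          + (i p : F) • AddMonoidAlgebra.single
              (α, ((fun r => i r - (if r = p then 1 else 0), j), l)) 1) :
    ∀ u v : KAlg F Γ m, D1 p (u * v) = D1 p u * v + u * D1 p v := by
  refine leibniz_of_basis ?_
  rintro ⟨γ, ⟨⟨i, j⟩, l⟩⟩ ⟨δ, ⟨⟨i', j'⟩, l'⟩⟩
  rw [single_mul_single, one_mul]
  rw [show ((γ, ((i, j), l)) + (δ, ((i', j'), l')) : KIndex Γ m)
        = (γ + δ, ((i + i', j + j'), l + l')) from rfl]
  rw [hD1 p (γ + δ) (i + i') (j + j') (l + l'), hD1 p γ i j l, hD1 p δ i' j' l']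
  simp only [add_mul, mul_add, smul_mul_assoc, mul_smul_comm, single_mul_single, mul_one,
    one_mul]
  rw [show ((γ, ((i, j), l)) + (δ, ((i', j'), l')) : KIndex Γ m)
        = (γ + δ, ((i + i', j + j'), l + l')) from rfl]
  rw [show ((γ, ((fun r => i r - (if r = p then 1 else 0), j), l)) + (δ, ((i', j'), l'))
        : KIndex Γ m)
      = (γ + δ, (((fun r => i r - (if r = p then 1 else 0)) + i', j + j'), l + l')) from rfl]
  rw [show ((γ, ((i, j), l)) + (δ, ((fun r => i' r - (if r = p then 1 else 0), j'), l'))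
        : KIndex Γ m)
      = (γ + δ, ((i + (fun r => i' r - (if r = p then 1 else 0)), j + j'), l + l')) from rfl]
  rw [map_add (φ1 p), add_smul]
  rw [show ((i + i') p) = i p + i' p from rfl, Nat.cast_add, add_smul]
  have key1 : ((i p : F)) • (single (γ + δ, ((fun r => (i + i') r - if r = p then 1 else 0, j + j'), l + l')) 1 : KAlg F Γ m)
      = (i p : F) • single (γ + δ, (((fun r => i r - if r = p then 1 else 0) + i'), j + j'), l + l') 1 := by
    rcases Nat.eq_zero_or_pos (i p) with h0 | h0
    · rw [h0]; simp
    · have : (fun r => (i + i') r - if r = p then 1 else 0)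
          = ((fun r => i r - if r = p then 1 else 0) + i') := by
        funext r
        by_cases hr : r = p
        · subst hr; simp; omega
        · simp only [Pi.add_apply, if_neg hr]; omega
      rw [this]
  have key2 : ((i' p : F)) • (single (γ + δ, ((fun r => (i + i') r - if r = p then 1 else 0, j + j'), l + l')) 1 : KAlg F Γ m)
      = (i' p : F) • single (γ + δ, ((i + fun r => i' r - if r = p then 1 else 0), j + j'), l + l') 1 := by
    rcases Nat.eq_zero_or_pos (i' p) with h0 | h0
    · rw [h0]; simp
    · have : (fun r => (i + i') r - if r = p then 1 else 0)
          = (i + fun r => i' r - if r = p then 1 else 0) := by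
        funext r
        by_cases hr : r = p
        · subst hr; simp; omega
        · simp only [Pi.add_apply, if_neg hr]; omega
      rw [this]
  rw [key1, key2]
  module

lemma d2_leibniz (p : Fin m)
    (hD2 : ∀ p (α : Γ) (i j : Fin m → ℕ) (l : ℕ),
      D2 p (AddMonoidAlgebra.single (α, ((i, j), l)) 1)
        = φ2 p α • AddMonoidAlgebra.single (α, ((i, j), l)) 1
          + (j p : F) • AddMonoidAlgebra.single
              (α, ((i, fun r => j r - (if r = p then 1 else 0)), l)) 1) :
    ∀ u v : KAlg F Γ m, D2 p (u * v) = D2 p u * v + u * D2 p v := by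
  refine leibniz_of_basis ?_
  rintro ⟨γ, ⟨⟨i, j⟩, l⟩⟩ ⟨δ, ⟨⟨i', j'⟩, l'⟩⟩
  rw [single_mul_single, one_mul]
  rw [show ((γ, ((i, j), l)) + (δ, ((i', j'), l')) : KIndex Γ m)
        = (γ + δ, ((i + i', j + j'), l + l')) from rfl]
  rw [hD2 p (γ + δ) (i + i') (j + j') (l + l'), hD2 p γ i j l, hD2 p δ i' j' l']
  simp only [add_mul, mul_add, smul_mul_assoc, mul_smul_comm, single_mul_single, mul_one,
    one_mul]
  rw [show ((γ, ((i, j), l)) + (δ, ((i', j'), l')) : KIndex Γ m)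
        = (γ + δ, ((i + i', j + j'), l + l')) from rfl]
  rw [show ((γ, ((i, fun r => j r - (if r = p then 1 else 0)), l)) + (δ, ((i', j'), l'))
        : KIndex Γ m)
      = (γ + δ, ((i + i', (fun r => j r - (if r = p then 1 else 0)) + j'), l + l')) from rfl]
  rw [show ((γ, ((i, j), l)) + (δ, ((i', fun r => j' r - (if r = p then 1 else 0)), l'))
        : KIndex Γ m)
      = (γ + δ, ((i + i', j + (fun r => j' r - (if r = p then 1 else 0))), l + l')) from rfl]
  rw [map_add (φ2 p), add_smul]
  rw [show ((j + j') p) = j p + j' p from rfl, Nat.cast_add, add_smul]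
  have key1 : ((j p : F)) • (single (γ + δ, ((i + i', fun r => (j + j') r - if r = p then 1 else 0), l + l')) 1 : KAlg F Γ m)
      = (j p : F) • single (γ + δ, ((i + i', (fun r => j r - if r = p then 1 else 0) + j'), l + l')) 1 := by
    rcases Nat.eq_zero_or_pos (j p) with h0 | h0
    · rw [h0]; simp
    · have : (fun r => (j + j') r - if r = p then 1 else 0)
          = ((fun r => j r - if r = p then 1 else 0) + j') := by
        funext r
        by_cases hr : r = p
        · subst hr; simp; omega
        · simp only [Pi.add_apply, if_neg hr]; omega
      rw [this]
  have key2 : ((j' p : F)) • (single (γ + δ, ((i + i', fun r => (j + j') r - if r = p then 1 else 0), l + l')) 1 : KAlg F Γ m)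
      = (j' p : F) • single (γ + δ, ((i + i', j + fun r => j' r - if r = p then 1 else 0), l + l')) 1 := by
    rcases Nat.eq_zero_or_pos (j' p) with h0 | h0
    · rw [h0]; simp
    · have : (fun r => (j + j') r - if r = p then 1 else 0)
          = (j + fun r => j' r - if r = p then 1 else 0) := by
        funext r
        by_cases hr : r = p
        · subst hr; simp; omega
        · simp only [Pi.add_apply, if_neg hr]; omega
      rw [this]
  rw [key1, key2]
  module

lemma dn_leibniz
    (hDn : ∀ (α : Γ) (i j : Fin m → ℕ) (l : ℕ),
      Dn (AddMonoidAlgebra.single (α, ((i, j), l)) 1)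
        = φn α • AddMonoidAlgebra.single (α, ((i, j), l)) 1
          + (l : F) • AddMonoidAlgebra.single (α, ((i, j), l - 1)) 1) :
    ∀ u v : KAlg F Γ m, Dn (u * v) = Dn u * v + u * Dn v := by
  refine leibniz_of_basis ?_
  rintro ⟨γ, ⟨⟨i, j⟩, l⟩⟩ ⟨δ, ⟨⟨i', j'⟩, l'⟩⟩
  rw [single_mul_single, one_mul]
  rw [show ((γ, ((i, j), l)) + (δ, ((i', j'), l')) : KIndex Γ m)
        = (γ + δ, ((i + i', j + j'), l + l')) from rfl]
  rw [hDn (γ + δ) (i + i') (j + j') (l + l'), hDn γ i j l, hDn δ i' j' l']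
  simp only [add_mul, mul_add, smul_mul_assoc, mul_smul_comm, single_mul_single, mul_one,
    one_mul]
  rw [show ((γ, ((i, j), l)) + (δ, ((i', j'), l')) : KIndex Γ m)
        = (γ + δ, ((i + i', j + j'), l + l')) from rfl]
  rw [show ((γ, ((i, j), l - 1)) + (δ, ((i', j'), l')) : KIndex Γ m)
        = (γ + δ, ((i + i', j + j'), (l - 1) + l')) from rfl]
  rw [show ((γ, ((i, j), l)) + (δ, ((i', j'), l' - 1)) : KIndex Γ m)
        = (γ + δ, ((i + i', j + j'), l + (l' - 1))) from rfl]
  rw [map_add φn, add_smul, Nat.cast_add, add_smul]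
  have key1 : ((l : F)) • (single (γ + δ, ((i + i', j + j'), l + l' - 1)) 1 : KAlg F Γ m)
      = (l : F) • single (γ + δ, ((i + i', j + j'), (l - 1) + l')) 1 := by
    rcases Nat.eq_zero_or_pos l with h0 | h0
    · rw [h0]; simp
    · rw [show l + l' - 1 = (l - 1) + l' by omega]
  have key2 : ((l' : F)) • (single (γ + δ, ((i + i', j + j'), l + l' - 1)) 1 : KAlg F Γ m)
      = (l' : F) • single (γ + δ, ((i + i', j + j'), l + (l' - 1))) 1 := by
    rcases Nat.eq_zero_or_pos l' with h0 | h0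
    · rw [h0]; simp
    · rw [show l + l' - 1 = l + (l' - 1) by omega]
  rw [key1, key2]
  module

lemma del_leibniz
    (hDel : ∀ (α : Γ) (i j : Fin m → ℕ) (l : ℕ),
      Del (AddMonoidAlgebra.single (α, ((i, j), l)) 1)
        = (∑ p : Fin m,
            ((if φ1 p = 0 then (i p : F) else φ1 p α)
              + (if φ2 p = 0 then (j p : F) else φ2 p α))) •
            AddMonoidAlgebra.single (α, ((i, j), l)) 1) :
    ∀ u v : KAlg F Γ m, Del (u * v) = Del u * v + u * Del v := by
  refine leibniz_of_basis ?_
  rintro ⟨γ, ⟨⟨i, j⟩, l⟩⟩ ⟨δ, ⟨⟨i', j'⟩, l'⟩⟩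
  rw [single_mul_single, one_mul]
  rw [show ((γ, ((i, j), l)) + (δ, ((i', j'), l')) : KIndex Γ m)
        = (γ + δ, ((i + i', j + j'), l + l')) from rfl]
  rw [hDel (γ + δ) (i + i') (j + j') (l + l'), hDel γ i j l, hDel δ i' j' l']
  simp only [smul_mul_assoc, mul_smul_comm, single_mul_single, mul_one, one_mul]
  rw [show ((γ, ((i, j), l)) + (δ, ((i', j'), l')) : KIndex Γ m)
        = (γ + δ, ((i + i', j + j'), l + l')) from rfl]
  rw [← add_smul, ← Finset.sum_add_distrib]
  congr 1
  apply Finset.sum_congr rfl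
  intro q _
  rw [show ((i + i') q) = i q + i' q from rfl, show ((j + j') q) = j q + j' q from rfl]
  by_cases h1 : φ1 q = 0 <;> by_cases h2 : φ2 q = 0 <;>
    simp [h1, h2, map_add, Nat.cast_add] <;> ring

section Comm
variable (hD1 : ∀ p (α : Γ) (i j : Fin m → ℕ) (l : ℕ),
      D1 p (AddMonoidAlgebra.single (α, ((i, j), l)) 1)
        = φ1 p α • AddMonoidAlgebra.single (α, ((i, j), l)) 1
          + (i p : F) • AddMonoidAlgebra.single
              (α, ((fun r => i r - (if r = p then 1 else 0), j), l)) 1)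
    (hD2 : ∀ p (α : Γ) (i j : Fin m → ℕ) (l : ℕ),
      D2 p (AddMonoidAlgebra.single (α, ((i, j), l)) 1)
        = φ2 p α • AddMonoidAlgebra.single (α, ((i, j), l)) 1
          + (j p : F) • AddMonoidAlgebra.single
              (α, ((i, fun r => j r - (if r = p then 1 else 0)), l)) 1)
    (hDn : ∀ (α : Γ) (i j : Fin m → ℕ) (l : ℕ),
      Dn (AddMonoidAlgebra.single (α, ((i, j), l)) 1)
        = φn α • AddMonoidAlgebra.single (α, ((i, j), l)) 1
          + (l : F) • AddMonoidAlgebra.single (α, ((i, j), l - 1)) 1)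
    (hDel : ∀ (α : Γ) (i j : Fin m → ℕ) (l : ℕ),
      Del (AddMonoidAlgebra.single (α, ((i, j), l)) 1)
        = (∑ p : Fin m,
            ((if φ1 p = 0 then (i p : F) else φ1 p α)
              + (if φ2 p = 0 then (j p : F) else φ2 p α))) •
            AddMonoidAlgebra.single (α, ((i, j), l)) 1)

include hD1 in
lemma comm_11 (p q : Fin m) : ∀ u : KAlg F Γ m, D1 p (D1 q u) = D1 q (D1 p u) := by
  rcases eq_or_ne p q with rfl | hpq
  · intro u; rfl
  intro u
  have h : ∀ g : KIndex Γ m,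
      ((D1 p) ∘ₗ (D1 q)) (single g 1) = ((D1 q) ∘ₗ (D1 p)) (single g 1) := by
    rintro ⟨γ, ⟨⟨i, j⟩, l⟩⟩
    simp only [LinearMap.comp_apply]
    rw [hD1 q γ i j l, hD1 p γ i j l, map_add, map_add, map_smul, map_smul, map_smul,
      map_smul, hD1 p γ i j l, hD1 q γ i j l,
      hD1 p γ (fun r => i r - (if r = q then 1 else 0)) j l,
      hD1 q γ (fun r => i r - (if r = p then 1 else 0)) j l]
    rw [show (i p - if p = q then 1 else 0) = i p from by simp [hpq],
      show (i q - if q = p then 1 else 0) = i q from by simp [hpq.symm],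
      show (fun r => (i r - if r = q then 1 else 0) - if r = p then 1 else 0)
        = (fun r => (i r - if r = p then 1 else 0) - if r = q then 1 else 0)
        from funext fun r => by omega]
    module
  exact endo_ext_apply h u

include hD2 in
lemma comm_22 (p q : Fin m) : ∀ u : KAlg F Γ m, D2 p (D2 q u) = D2 q (D2 p u) := by
  rcases eq_or_ne p q with rfl | hpq
  · intro u; rfl
  intro u
  have h : ∀ g : KIndex Γ m,
      ((D2 p) ∘ₗ (D2 q)) (single g 1) = ((D2 q) ∘ₗ (D2 p)) (single g 1) := by
    rintro ⟨γ, ⟨⟨i, j⟩, l⟩⟩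
    simp only [LinearMap.comp_apply]
    rw [hD2 q γ i j l, hD2 p γ i j l, map_add, map_add, map_smul, map_smul, map_smul,
      map_smul, hD2 p γ i j l, hD2 q γ i j l,
      hD2 p γ i (fun r => j r - (if r = q then 1 else 0)) l,
      hD2 q γ i (fun r => j r - (if r = p then 1 else 0)) l]
    rw [show (j p - if p = q then 1 else 0) = j p from by simp [hpq],
      show (j q - if q = p then 1 else 0) = j q from by simp [hpq.symm],
      show (fun r => (j r - if r = q then 1 else 0) - if r = p then 1 else 0)
        = (fun r => (j r - if r = p then 1 else 0) - if r = q then 1 else 0)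
        from funext fun r => by omega]
    module
  exact endo_ext_apply h u

include hD1 hD2 in
lemma comm_12 (p q : Fin m) : ∀ u : KAlg F Γ m, D2 q (D1 p u) = D1 p (D2 q u) := by
  intro u
  have h : ∀ g : KIndex Γ m,
      ((D2 q) ∘ₗ (D1 p)) (single g 1) = ((D1 p) ∘ₗ (D2 q)) (single g 1) := by
    rintro ⟨γ, ⟨⟨i, j⟩, l⟩⟩
    simp only [LinearMap.comp_apply]
    rw [hD1 p γ i j l, hD2 q γ i j l, map_add, map_add, map_smul, map_smul, map_smul,
      map_smul, hD2 q γ i j l, hD1 p γ i j l,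
      hD2 q γ (fun r => i r - (if r = p then 1 else 0)) j l,
      hD1 p γ i (fun r => j r - (if r = q then 1 else 0)) l]
    module
  exact endo_ext_apply h u

include hD1 hDn in
lemma comm_n1 (p : Fin m) : ∀ u : KAlg F Γ m, Dn (D1 p u) = D1 p (Dn u) := by
  intro u
  have h : ∀ g : KIndex Γ m,
      (Dn ∘ₗ (D1 p)) (single g 1) = ((D1 p) ∘ₗ Dn) (single g 1) := by
    rintro ⟨γ, ⟨⟨i, j⟩, l⟩⟩
    simp only [LinearMap.comp_apply]
    rw [hD1 p γ i j l, hDn γ i j l, map_add, map_add, map_smul, map_smul, map_smul,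
      map_smul, hDn γ i j l, hD1 p γ i j l,
      hDn γ (fun r => i r - (if r = p then 1 else 0)) j l,
      hD1 p γ i j (l - 1)]
    module
  exact endo_ext_apply h u

include hD2 hDn in
lemma comm_n2 (p : Fin m) : ∀ u : KAlg F Γ m, Dn (D2 p u) = D2 p (Dn u) := by
  intro u
  have h : ∀ g : KIndex Γ m,
      (Dn ∘ₗ (D2 p)) (single g 1) = ((D2 p) ∘ₗ Dn) (single g 1) := by
    rintro ⟨γ, ⟨⟨i, j⟩, l⟩⟩
    simp only [LinearMap.comp_apply]
    rw [hD2 p γ i j l, hDn γ i j l, map_add, map_add, map_smul, map_smul, map_smul,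
      map_smul, hDn γ i j l, hD2 p γ i j l,
      hDn γ i (fun r => j r - (if r = p then 1 else 0)) l,
      hD2 p γ i j (l - 1)]
    module
  exact endo_ext_apply h u

include hDn hDel in
lemma comm_nDel : ∀ u : KAlg F Γ m, Del (Dn u) = Dn (Del u) := by
  intro u
  have h : ∀ g : KIndex Γ m,
      (Del ∘ₗ Dn) (single g 1) = (Dn ∘ₗ Del) (single g 1) := by
    rintro ⟨γ, ⟨⟨i, j⟩, l⟩⟩
    simp only [LinearMap.comp_apply]
    rw [hDn γ i j l, hDel γ i j l, map_add, map_smul, map_smul, map_smul,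
      hDel γ i j l, hDel γ i j (l - 1), hDn γ i j l]
    module
  exact endo_ext_apply h u
end Comm

section DelComm
variable (hD1 : ∀ p (α : Γ) (i j : Fin m → ℕ) (l : ℕ),
      D1 p (AddMonoidAlgebra.single (α, ((i, j), l)) 1)
        = φ1 p α • AddMonoidAlgebra.single (α, ((i, j), l)) 1
          + (i p : F) • AddMonoidAlgebra.single
              (α, ((fun r => i r - (if r = p then 1 else 0), j), l)) 1)
    (hD2 : ∀ p (α : Γ) (i j : Fin m → ℕ) (l : ℕ),
      D2 p (AddMonoidAlgebra.single (α, ((i, j), l)) 1)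
        = φ2 p α • AddMonoidAlgebra.single (α, ((i, j), l)) 1
          + (j p : F) • AddMonoidAlgebra.single
              (α, ((i, fun r => j r - (if r = p then 1 else 0)), l)) 1)
    (hDel : ∀ (α : Γ) (i j : Fin m → ℕ) (l : ℕ),
      Del (AddMonoidAlgebra.single (α, ((i, j), l)) 1)
        = (∑ p : Fin m,
            ((if φ1 p = 0 then (i p : F) else φ1 p α)
              + (if φ2 p = 0 then (j p : F) else φ2 p α))) •
            AddMonoidAlgebra.single (α, ((i, j), l)) 1)

include hD1 hDel in
lemma comm_del1 (p : Fin m) : ∀ u : KAlg F Γ m,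
    Del (D1 p u) = D1 p (Del u) - (if φ1 p = 0 then (1:F) else 0) • D1 p u := by
  intro u
  have h : ∀ g : KIndex Γ m,
      (Del ∘ₗ (D1 p)) (single g 1)
        = ((D1 p) ∘ₗ Del - (if φ1 p = 0 then (1:F) else 0) • (D1 p)) (single g 1) := by
    rintro ⟨γ, ⟨⟨i, j⟩, l⟩⟩
    simp only [LinearMap.comp_apply, LinearMap.sub_apply, LinearMap.smul_apply]
    rw [hD1 p γ i j l, hDel γ i j l, map_add, map_smul, map_smul, hDel γ i j l,
      hDel γ (fun r => i r - (if r = p then 1 else 0)) j l, map_smul, hD1 p γ i j l]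
    have hephi : ((if φ1 p = 0 then (1:F) else 0)) * φ1 p γ = 0 := by
      by_cases h1 : φ1 p = 0 <;> simp [h1]
    have key : ((i p : F)) * (∑ q : Fin m,
          ((if φ1 q = 0 then ((i q - if q = p then 1 else 0 : ℕ) : F) else φ1 q γ)
            + (if φ2 q = 0 then (j q : F) else φ2 q γ)))
        = (i p : F) * (∑ q : Fin m,
          ((if φ1 q = 0 then (i q : F) else φ1 q γ)
            + (if φ2 q = 0 then (j q : F) else φ2 q γ)))
          - (if φ1 p = 0 then (1:F) else 0) * (i p : F) := by
      rcases Nat.eq_zero_or_pos (i p) with h0 | h0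
      · rw [h0]; simp
      · have hsum : ∀ q ∈ Finset.univ (α := Fin m),
            ((if φ1 q = 0 then ((i q - if q = p then 1 else 0 : ℕ) : F) else φ1 q γ)
              + (if φ2 q = 0 then (j q : F) else φ2 q γ))
            = ((if φ1 q = 0 then (i q : F) else φ1 q γ)
              + (if φ2 q = 0 then (j q : F) else φ2 q γ))
              - (if q = p then (if φ1 p = 0 then (1:F) else 0) else 0) := by
          intro q _
          by_cases hq : q = p
          · subst hq
            by_cases h1 : φ1 q = 0
            · simp only [h1, if_true, if_pos rfl]
              rw [Nat.cast_sub (by omega)]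
              push_cast; ring
            · simp [h1]
          · simp [hq]
        rw [Finset.sum_congr rfl hsum, Finset.sum_sub_distrib,
          Finset.sum_ite_eq' Finset.univ p]
        rw [if_pos (Finset.mem_univ p)]
        ring
    simp only [smul_add, smul_smul]
    rw [key]
    match_scalars <;> by_cases h1 : φ1 p = 0 <;> simp [h1] <;> ring
  have := endo_ext_apply h u
  simp only [LinearMap.comp_apply, LinearMap.sub_apply, LinearMap.smul_apply] at this
  exact this

include hD2 hDel in
lemma comm_del2 (p : Fin m) : ∀ u : KAlg F Γ m,
    Del (D2 p u) = D2 p (Del u) - (if φ2 p = 0 then (1:F) else 0) • D2 p u := by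
  intro u
  have h : ∀ g : KIndex Γ m,
      (Del ∘ₗ (D2 p)) (single g 1)
        = ((D2 p) ∘ₗ Del - (if φ2 p = 0 then (1:F) else 0) • (D2 p)) (single g 1) := by
    rintro ⟨γ, ⟨⟨i, j⟩, l⟩⟩
    simp only [LinearMap.comp_apply, LinearMap.sub_apply, LinearMap.smul_apply]
    rw [hD2 p γ i j l, hDel γ i j l, map_add, map_smul, map_smul, hDel γ i j l,
      hDel γ i (fun r => j r - (if r = p then 1 else 0)) l, map_smul, hD2 p γ i j l]
    have hephi : ((if φ2 p = 0 then (1:F) else 0)) * φ2 p γ = 0 := by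
      by_cases h1 : φ2 p = 0 <;> simp [h1]
    have key : ((j p : F)) * (∑ q : Fin m,
          ((if φ1 q = 0 then (i q : F) else φ1 q γ)
            + (if φ2 q = 0 then ((j q - if q = p then 1 else 0 : ℕ) : F) else φ2 q γ)))
        = (j p : F) * (∑ q : Fin m,
          ((if φ1 q = 0 then (i q : F) else φ1 q γ)
            + (if φ2 q = 0 then (j q : F) else φ2 q γ)))
          - (if φ2 p = 0 then (1:F) else 0) * (j p : F) := by
      rcases Nat.eq_zero_or_pos (j p) with h0 | h0
      · rw [h0]; simp
      · have hsum : ∀ q ∈ Finset.univ (α := Fin m),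
            ((if φ1 q = 0 then (i q : F) else φ1 q γ)
              + (if φ2 q = 0 then ((j q - if q = p then 1 else 0 : ℕ) : F) else φ2 q γ))
            = ((if φ1 q = 0 then (i q : F) else φ1 q γ)
              + (if φ2 q = 0 then (j q : F) else φ2 q γ))
              - (if q = p then (if φ2 p = 0 then (1:F) else 0) else 0) := by
          intro q _
          by_cases hq : q = p
          · subst hq
            by_cases h2 : φ2 q = 0
            · simp only [h2, if_true, if_pos rfl]
              rw [Nat.cast_sub (by omega)]
              push_cast; ring
            · simp [h2]
          · simp [hq]
        rw [Finset.sum_congr rfl hsum, Finset.sum_sub_distrib,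
          Finset.sum_ite_eq' Finset.univ p]
        rw [if_pos (Finset.mem_univ p)]
        ring
    simp only [smul_add, smul_smul]
    rw [key]
    match_scalars <;> by_cases h2 : φ2 p = 0 <;> simp [h2] <;> ring
  have := endo_ext_apply h u
  simp only [LinearMap.comp_apply, LinearMap.sub_apply, LinearMap.smul_apply] at this
  exact this
end DelComm

section Vals
variable (hD1 : ∀ p (α : Γ) (i j : Fin m → ℕ) (l : ℕ),
      D1 p (AddMonoidAlgebra.single (α, ((i, j), l)) 1)
        = φ1 p α • AddMonoidAlgebra.single (α, ((i, j), l)) 1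
          + (i p : F) • AddMonoidAlgebra.single
              (α, ((fun r => i r - (if r = p then 1 else 0), j), l)) 1)
    (hD2 : ∀ p (α : Γ) (i j : Fin m → ℕ) (l : ℕ),
      D2 p (AddMonoidAlgebra.single (α, ((i, j), l)) 1)
        = φ2 p α • AddMonoidAlgebra.single (α, ((i, j), l)) 1
          + (j p : F) • AddMonoidAlgebra.single
              (α, ((i, fun r => j r - (if r = p then 1 else 0)), l)) 1)
    (hDn : ∀ (α : Γ) (i j : Fin m → ℕ) (l : ℕ),
      Dn (AddMonoidAlgebra.single (α, ((i, j), l)) 1)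
        = φn α • AddMonoidAlgebra.single (α, ((i, j), l)) 1
          + (l : F) • AddMonoidAlgebra.single (α, ((i, j), l - 1)) 1)
    (hDel : ∀ (α : Γ) (i j : Fin m → ℕ) (l : ℕ),
      Del (AddMonoidAlgebra.single (α, ((i, j), l)) 1)
        = (∑ p : Fin m,
            ((if φ1 p = 0 then (i p : F) else φ1 p α)
              + (if φ2 p = 0 then (j p : F) else φ2 p α))) •
            AddMonoidAlgebra.single (α, ((i, j), l)) 1)

include hD1 in
lemma val_d1 (q : Fin m) (γ : Γ) :
    D1 q (single ((γ, 0) : KIndex Γ m) 1) = (φ1 q γ) • single ((γ, 0) : KIndex Γ m) 1 := by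
  rw [show ((γ, 0) : KIndex Γ m) = (γ, ((0, 0), 0)) from rfl, hD1 q γ 0 0 0]
  simp

include hD2 in
lemma val_d2 (q : Fin m) (γ : Γ) :
    D2 q (single ((γ, 0) : KIndex Γ m) 1) = (φ2 q γ) • single ((γ, 0) : KIndex Γ m) 1 := by
  rw [show ((γ, 0) : KIndex Γ m) = (γ, ((0, 0), 0)) from rfl, hD2 q γ 0 0 0]
  simp

include hDn in
lemma val_dn (γ : Γ) :
    Dn (single ((γ, 0) : KIndex Γ m) 1) = (φn γ) • single ((γ, 0) : KIndex Γ m) 1 := by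
  rw [show ((γ, 0) : KIndex Γ m) = (γ, ((0, 0), 0)) from rfl, hDn γ 0 0 0]
  simp

include hDel in
lemma val_del_sp (p : Fin m)
    (hσker : ∀ p q : Fin m, q ≠ p → φ1 q (σ p) = 0 ∧ φ2 q (σ p) = 0) :
    Del (single ((σ p, 0) : KIndex Γ m) 1)
      = (φ1 p (σ p) + φ2 p (σ p)) • single ((σ p, 0) : KIndex Γ m) 1 := by
  rw [show ((σ p, 0) : KIndex Γ m) = (σ p, ((0, 0), 0)) from rfl, hDel (σ p) 0 0 0]
  congr 1
  have : ∀ q ∈ Finset.univ (α := Fin m),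
      ((if φ1 q = 0 then ((0 : Fin m → ℕ) q : F) else φ1 q (σ p))
        + (if φ2 q = 0 then ((0 : Fin m → ℕ) q : F) else φ2 q (σ p)))
      = (if q = p then (φ1 p (σ p) + φ2 p (σ p)) else 0) := by
    intro q _
    by_cases hq : q = p
    · subst hq
      by_cases h1 : φ1 q = 0 <;> by_cases h2 : φ2 q = 0 <;> simp [h1, h2]
    · obtain ⟨e1, e2⟩ := hσker p q hq
      by_cases h1 : φ1 q = 0 <;> by_cases h2 : φ2 q = 0 <;> simp [h1, h2, e1, e2, hq]
  rw [Finset.sum_congr rfl this, Finset.sum_ite_eq' Finset.univ p]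
  simp

include hDel in
lemma val_del_sn (hσn : ∀ p, φ1 p σn = 0 ∧ φ2 p σn = 0) :
    Del (single ((σn, 0) : KIndex Γ m) 1) = 0 := by
  rw [show ((σn, 0) : KIndex Γ m) = (σn, ((0, 0), 0)) from rfl, hDel σn 0 0 0]
  have : ∀ q ∈ Finset.univ (α := Fin m),
      ((if φ1 q = 0 then ((0 : Fin m → ℕ) q : F) else φ1 q σn)
        + (if φ2 q = 0 then ((0 : Fin m → ℕ) q : F) else φ2 q σn)) = 0 := by
    intro q _
    obtain ⟨e1, e2⟩ := hσn q
    by_cases h1 : φ1 q = 0 <;> by_cases h2 : φ2 q = 0 <;> simp [h1, h2, e1, e2]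
  rw [Finset.sum_congr rfl this]
  simp

include hD1 in
lemma val_d1_one (q : Fin m) : D1 q (1 : KAlg F Γ m) = 0 := by
  rw [AddMonoidAlgebra.one_def,
    show ((0 : KIndex Γ m)) = ((0 : Γ), (((0 : Fin m → ℕ), (0 : Fin m → ℕ)), (0 : ℕ))) from rfl,
    hD1 q 0 0 0 0]
  simp

include hD2 in
lemma val_d2_one (q : Fin m) : D2 q (1 : KAlg F Γ m) = 0 := by
  rw [AddMonoidAlgebra.one_def,
    show ((0 : KIndex Γ m)) = ((0 : Γ), (((0 : Fin m → ℕ), (0 : Fin m → ℕ)), (0 : ℕ))) from rfl,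
    hD2 q 0 0 0 0]
  simp

include hDn in
lemma val_dn_one : Dn (1 : KAlg F Γ m) = 0 := by
  rw [AddMonoidAlgebra.one_def,
    show ((0 : KIndex Γ m)) = ((0 : Γ), (((0 : Fin m → ℕ), (0 : Fin m → ℕ)), (0 : ℕ))) from rfl,
    hDn 0 0 0 0]
  simp

include hDel in
lemma val_del_one : Del (1 : KAlg F Γ m) = 0 := by
  rw [AddMonoidAlgebra.one_def,
    show ((0 : KIndex Γ m)) = ((0 : Γ), (((0 : Fin m → ℕ), (0 : Fin m → ℕ)), (0 : ℕ))) from rfl,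
    hDel 0 0 0 0]
  simp

lemma val_two {T : Module.End F (KAlg F Γ m)} (h : T 1 = 0) : T (2 : KAlg F Γ m) = 0 := by
  rw [show (2 : KAlg F Γ m) = 1 + 1 from (one_add_one_eq_two).symm, map_add, h, add_zero]

end Vals
end KProof

/-- The type-K bracket (5.12) makes `A` into a Lie algebra. Here `φ1 p`, `φ2 p`, `φn` play
the roles of `φₚ`, `φ_{p'} = φ_{m+p}`, `φₙ`; `Del` is the derivation `∂` of (5.11), whose
eigenvalue on `x^{α,i⃗}` uses `φₚ(α)` at positions in `℧₁` (where `φₚ ≢ 0`) and `i_q` at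
positions in `℧₂`. -/
theorem type_K_bracket_is_lie_algebra
    {F Γ : Type*} [Field F] [AddCommGroup Γ] (m : ℕ)
    (φ1 φ2 : Fin m → (Γ →+ F)) (φn : Γ →+ F)
    (σ : Fin m → Γ) (σn : Γ)
    (hσΓ1 : ∀ p, φn (σ p) = 0)
    (hσker : ∀ p q : Fin m, q ≠ p → φ1 q (σ p) = 0 ∧ φ2 q (σ p) = 0)
    (hσ0 : ∀ p, φ1 p = 0 → φ2 p = 0 → σ p = 0)
    (hσnorm1 : ∀ p, φ1 p ≠ 0 → φ1 p (σ p) = -1)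
    (hσnorm2 : ∀ p, φ2 p ≠ 0 → φ2 p (σ p) = -1)
    (hσn : ∀ p, φ1 p σn = 0 ∧ φ2 p σn = 0)
    (D1 D2 : Fin m → Module.End F (KAlg F Γ m))
    (Dn Del : Module.End F (KAlg F Γ m))
    (hD1 : ∀ p (α : Γ) (i j : Fin m → ℕ) (l : ℕ),
      D1 p (AddMonoidAlgebra.single (α, ((i, j), l)) 1)
        = φ1 p α • AddMonoidAlgebra.single (α, ((i, j), l)) 1
          + (i p : F) • AddMonoidAlgebra.single
              (α, ((fun r => i r - (if r = p then 1 else 0), j), l)) 1)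
    (hD2 : ∀ p (α : Γ) (i j : Fin m → ℕ) (l : ℕ),
      D2 p (AddMonoidAlgebra.single (α, ((i, j), l)) 1)
        = φ2 p α • AddMonoidAlgebra.single (α, ((i, j), l)) 1
          + (j p : F) • AddMonoidAlgebra.single
              (α, ((i, fun r => j r - (if r = p then 1 else 0)), l)) 1)
    (hDn : ∀ (α : Γ) (i j : Fin m → ℕ) (l : ℕ),
      Dn (AddMonoidAlgebra.single (α, ((i, j), l)) 1)
        = φn α • AddMonoidAlgebra.single (α, ((i, j), l)) 1
          + (l : F) • AddMonoidAlgebra.single (α, ((i, j), l - 1)) 1)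
    (hDel : ∀ (α : Γ) (i j : Fin m → ℕ) (l : ℕ),
      Del (AddMonoidAlgebra.single (α, ((i, j), l)) 1)
        = (∑ p : Fin m,
            ((if φ1 p = 0 then (i p : F) else φ1 p α)
              + (if φ2 p = 0 then (j p : F) else φ2 p α))) •
            AddMonoidAlgebra.single (α, ((i, j), l)) 1)
    (br : KAlg F Γ m →ₗ[F] KAlg F Γ m →ₗ[F] KAlg F Γ m)
    (hbr : ∀ g h : KIndex Γ m,
      br (AddMonoidAlgebra.single g 1) (AddMonoidAlgebra.single h 1)
        = (∑ p : Fin m,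
            AddMonoidAlgebra.single ((σ p, 0) : KIndex Γ m) 1 *
              (D1 p (AddMonoidAlgebra.single g 1) * D2 p (AddMonoidAlgebra.single h 1)
                - D2 p (AddMonoidAlgebra.single g 1) * D1 p (AddMonoidAlgebra.single h 1)))
          + AddMonoidAlgebra.single ((σn, 0) : KIndex Γ m) 1 *
              (((2 : F) • AddMonoidAlgebra.single g 1 - Del (AddMonoidAlgebra.single g 1)) *
                  Dn (AddMonoidAlgebra.single h 1)
                - Dn (AddMonoidAlgebra.single g 1) *
                  ((2 : F) • AddMonoidAlgebra.single h 1 - Del (AddMonoidAlgebra.single h 1)))) :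
    (∀ u v, br u v = - br v u) ∧ (∀ u, br u u = 0) ∧
    (∀ u v w, br (br u v) w + br (br v w) u + br (br w u) v = 0) := by
  classical
  -- notation
  set A := KAlg F Γ m with hA
  set Sp : Fin m → KAlg F Γ m := fun p => AddMonoidAlgebra.single ((σ p, 0) : KIndex Γ m) 1
    with hSpdef
  set Sn : KAlg F Γ m := AddMonoidAlgebra.single ((σn, 0) : KIndex Γ m) 1 with hSndef
  -- Leibniz rules
  have L1 : ∀ p (u v : KAlg F Γ m), D1 p (u * v) = D1 p u * v + u * D1 p v :=
    fun p => KProof.d1_leibniz p hD1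
  have L2 : ∀ p (u v : KAlg F Γ m), D2 p (u * v) = D2 p u * v + u * D2 p v :=
    fun p => KProof.d2_leibniz p hD2
  have Ln : ∀ u v : KAlg F Γ m, Dn (u * v) = Dn u * v + u * Dn v := KProof.dn_leibniz hDn
  have Ld : ∀ u v : KAlg F Γ m, Del (u * v) = Del u * v + u * Del v := KProof.del_leibniz hDel
  -- commutation relations
  have C11 := KProof.comm_11 hD1
  have C22 := KProof.comm_22 hD2
  have C12 := KProof.comm_12 hD1 hD2
  have Cn1 := KProof.comm_n1 hD1 hDn
  have Cn2 := KProof.comm_n2 hD2 hDn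
  have Cnd := KProof.comm_nDel hDn hDel
  have Cd1 := KProof.comm_del1 hD1 hDel
  have Cd2 := KProof.comm_del2 hD2 hDel
  -- values
  have V1 := KProof.val_d1 hD1
  have V2 := KProof.val_d2 hD2
  have Vn := KProof.val_dn hDn
  have Vdp := KProof.val_del_sp (σ := σ) hDel
  have Vdn := KProof.val_del_sn hDel hσn
  have O1 : ∀ p, D1 p (2 : KAlg F Γ m) = 0 :=
    fun p => KProof.val_two (KProof.val_d1_one hD1 p)
  have O2 : ∀ p, D2 p (2 : KAlg F Γ m) = 0 :=
    fun p => KProof.val_two (KProof.val_d2_one hD2 p)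
  have On : Dn (2 : KAlg F Γ m) = 0 := KProof.val_two (KProof.val_dn_one hDn)
  have Od : Del (2 : KAlg F Γ m) = 0 := KProof.val_two (KProof.val_del_one hDel)
  -- smul-to-mul conversion
  have htwo : ∀ x : KAlg F Γ m, (2 : F) • x = 2 * x := fun x => by
    rw [two_smul, two_mul]
  -- the bracket formula for general elements
  have hbrAll : ∀ u v : KAlg F Γ m, br u v
      = (∑ p, Sp p * (D1 p u * D2 p v - D2 p u * D1 p v))
        + Sn * ((2 * u - Del u) * Dn v - Dn u * (2 * v - Del v)) := by
    have hsplit : br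
        = (∑ p, (((LinearMap.mul F (KAlg F Γ m)).compl₁₂ (D1 p) (D2 p))
              - ((LinearMap.mul F (KAlg F Γ m)).compl₁₂ (D2 p) (D1 p))).compr₂
                (LinearMap.mulLeft F (Sp p)))
          + ((((LinearMap.mul F (KAlg F Γ m)).compl₁₂
                  ((2 : F) • (LinearMap.id : Module.End F (KAlg F Γ m)) - Del) Dn)
              - (((LinearMap.mul F (KAlg F Γ m)).compl₁₂ Dn
                  ((2 : F) • (LinearMap.id : Module.End F (KAlg F Γ m)) - Del)))).compr₂
                (LinearMap.mulLeft F Sn)) := by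
      apply AddMonoidAlgebra.lhom_ext'; intro g
      apply LinearMap.ext; intro gc
      apply AddMonoidAlgebra.lhom_ext'; intro h
      apply LinearMap.ext; intro hc
      simp only [LinearMap.comp_apply, AddMonoidAlgebra.lsingle_apply]
      rw [KProofAux.single_eq_smul g gc, KProofAux.single_eq_smul h hc]
      simp only [map_smul, LinearMap.smul_apply]
      congr 1; congr 1
      rw [hbr g h]
      simp only [LinearMap.add_apply, LinearMap.sum_apply, LinearMap.compr₂_apply,
        LinearMap.sub_apply, LinearMap.compl₁₂_apply, LinearMap.mul_apply',
        LinearMap.mulLeft_apply, LinearMap.smul_apply, LinearMap.id_apply]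
      rfl
    intro u v
    have := LinearMap.congr_fun (LinearMap.congr_fun hsplit u) v
    simp only [LinearMap.add_apply, LinearMap.sum_apply, LinearMap.compr₂_apply,
      LinearMap.sub_apply, LinearMap.compl₁₂_apply, LinearMap.mul_apply',
      LinearMap.mulLeft_apply, LinearMap.smul_apply, LinearMap.id_apply] at this
    rw [this, htwo u, htwo v]
  -- antisymmetry
  have hanti : ∀ u v : KAlg F Γ m, br u v + br v u = 0 := by
    intro u v
    rw [hbrAll u v, hbrAll v u]
    have h1 : (∑ p, Sp p * (D1 p u * D2 p v - D2 p u * D1 p v))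
        + (∑ p, Sp p * (D1 p v * D2 p u - D2 p v * D1 p u)) = 0 := by
      rw [← Finset.sum_add_distrib]
      exact Finset.sum_eq_zero fun p _ => by ring
    linear_combination h1
  have halt : ∀ u : KAlg F Γ m, br u u = 0 := by
    intro u
    rw [hbrAll u u]
    have h1 : (∑ p, Sp p * (D1 p u * D2 p u - D2 p u * D1 p u)) = 0 :=
      Finset.sum_eq_zero fun p _ => by ring
    linear_combination h1
  refine ⟨fun u v => eq_neg_of_add_eq_zero_left (hanti u v), halt, ?_⟩
  -- Jacobi identity
  intro u v w
  have e1eq : ∀ p, (if φ1 p = 0 then (1 : F) else 0) = 1 + φ1 p (σ p) := by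
    intro p
    by_cases h : φ1 p = 0
    · simp [h]
    · rw [if_neg h, hσnorm1 p h]; ring
  have e2eq : ∀ p, (if φ2 p = 0 then (1 : F) else 0) = 1 + φ2 p (σ p) := by
    intro p
    by_cases h : φ2 p = 0
    · simp [h]
    · rw [if_neg h, hσnorm2 p h]; ring
  have asm : ∀ (r : F) (x : KAlg F Γ m), r • x = algebraMap F (KAlg F Γ m) r * x :=
    fun r x => Algebra.smul_def r x
  have HcXD : ∀ p (x : KAlg F Γ m), Del (D1 p x)
      = D1 p (Del x) - (1 + algebraMap F (KAlg F Γ m) (φ1 p (σ p))) * D1 p x := by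
    intro p x
    rw [Cd1 p x, e1eq p, asm, map_add, map_one]
  have HcYD : ∀ p (x : KAlg F Γ m), Del (D2 p x)
      = D2 p (Del x) - (1 + algebraMap F (KAlg F Γ m) (φ2 p (σ p))) * D2 p x := by
    intro p x
    rw [Cd2 p x, e2eq p, asm, map_add, map_one]
  have HXs : ∀ q p, D1 q (Sp p)
      = (if q = p then algebraMap F (KAlg F Γ m) (φ1 p (σ p)) else 0) * Sp p := by
    intro q p
    simp only [hSpdef]
    rw [V1 q (σ p)]
    by_cases hqp : q = p
    · subst hqp; rw [if_pos rfl, asm]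
    · rw [if_neg hqp, (hσker p q hqp).1, zero_smul, zero_mul]
  have HYs : ∀ q p, D2 q (Sp p)
      = (if q = p then algebraMap F (KAlg F Γ m) (φ2 p (σ p)) else 0) * Sp p := by
    intro q p
    simp only [hSpdef]
    rw [V2 q (σ p)]
    by_cases hqp : q = p
    · subst hqp; rw [if_pos rfl, asm]
    · rw [if_neg hqp, (hσker p q hqp).2, zero_smul, zero_mul]
  have HNs : ∀ p, Dn (Sp p) = 0 := by
    intro p
    simp only [hSpdef]
    rw [Vn (σ p), hσΓ1 p, zero_smul]
  have HDs : ∀ p, Del (Sp p)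
      = (algebraMap F (KAlg F Γ m) (φ1 p (σ p)) + algebraMap F (KAlg F Γ m) (φ2 p (σ p)))
          * Sp p := by
    intro p
    simp only [hSpdef]
    rw [Vdp p hσker, asm, map_add]
  have HXt : ∀ p, D1 p Sn = 0 := by
    intro p
    simp only [hSndef]
    rw [V1 p σn, (hσn p).1, zero_smul]
  have HYt : ∀ p, D2 p Sn = 0 := by
    intro p
    simp only [hSndef]
    rw [V2 p σn, (hσn p).2, zero_smul]
  have HNt : Dn Sn = algebraMap F (KAlg F Γ m) (φn σn) * Sn := by
    simp only [hSndef]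
    rw [Vn σn, asm]
  have HDt : Del Sn = 0 := by
    simp only [hSndef]
    rw [Vdn]
  exact KProofAux.jacobi_master (fun x y => br x y)
    (fun p x => D1 p x) (fun p x => D2 p x) (fun x => Dn x) (fun x => Del x)
    Sp Sn
    (fun p => algebraMap F (KAlg F Γ m) (φ1 p (σ p)))
    (fun p => algebraMap F (KAlg F Γ m) (φ2 p (σ p)))
    (algebraMap F (KAlg F Γ m) (φn σn))
    (fun p x y => map_add (D1 p) x y) (fun p x y => map_add (D2 p) x y)
    (fun x y => map_add Dn x y) (fun x y => map_add Del x y)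
    (fun p x y => map_sub (D1 p) x y) (fun p x y => map_sub (D2 p) x y)
    (fun x y => map_sub Dn x y) (fun x y => map_sub Del x y)
    (fun p x y => L1 p x y) (fun p x y => L2 p x y) Ln Ld
    O1 O2 On Od
    (fun p q x => C11 p q x) (fun p q x => C22 p q x) (fun p q x => C12 p q x)
    (fun p x => Cn1 p x) (fun p x => Cn2 p x) (fun x => Cnd x)
    HcXD HcYD HXs HYs HNs HDs HXt HYt HNt HDt hbrAll u v w
end Auxiliary
end

section
/- In the type-K algebra restricted to A' = {u ∈ A : ∂ₙ(u) = 0}, the bracket reduces to the type-H form: for u, v ∈ A', [u,v]_K = Σ_{p=1}^{m} x₁^{σₚ}(∂ₚ(u)∂_{p'}(v) − ∂_{p'}(u)∂ₚ(v)), and A' is a Lie subalgebra of (A, [·,·]_K). -/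
open scoped Classical

/-- On `A' = ker ∂ₙ` the type-K bracket reduces to the type-H form
`[u,v] = Σₚ x₁^{σₚ}(∂ₚ(u)∂_{p'}(v) − ∂_{p'}(u)∂ₚ(v))`, and `A'` is a Lie subalgebra of
`(A, [·,·]_K)` (the bracket of two elements of `A'` lies in `A'`). -/
theorem type_K_restricts_to_type_H_on_kernel
    {F Γ : Type*} [Field F] [AddCommGroup Γ] (m : ℕ)
    (φ1 φ2 : Fin m → (Γ →+ F)) (φn : Γ →+ F)
    (σ : Fin m → Γ) (σn : Γ)
    (hσΓ1 : ∀ p, φn (σ p) = 0)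
    (hσker : ∀ p q : Fin m, q ≠ p → φ1 q (σ p) = 0 ∧ φ2 q (σ p) = 0)
    (hσ0 : ∀ p, φ1 p = 0 → φ2 p = 0 → σ p = 0)
    (hσnorm1 : ∀ p, φ1 p ≠ 0 → φ1 p (σ p) = -1)
    (hσnorm2 : ∀ p, φ2 p ≠ 0 → φ2 p (σ p) = -1)
    (hσn : ∀ p, φ1 p σn = 0 ∧ φ2 p σn = 0)
    (D1 D2 : Fin m → Module.End F (KAlg F Γ m))
    (Dn Del : Module.End F (KAlg F Γ m))
    (hD1 : ∀ p (α : Γ) (i j : Fin m → ℕ) (l : ℕ),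
      D1 p (AddMonoidAlgebra.single (α, ((i, j), l)) 1)
        = φ1 p α • AddMonoidAlgebra.single (α, ((i, j), l)) 1
          + (i p : F) • AddMonoidAlgebra.single
              (α, ((fun r => i r - (if r = p then 1 else 0), j), l)) 1)
    (hD2 : ∀ p (α : Γ) (i j : Fin m → ℕ) (l : ℕ),
      D2 p (AddMonoidAlgebra.single (α, ((i, j), l)) 1)
        = φ2 p α • AddMonoidAlgebra.single (α, ((i, j), l)) 1
          + (j p : F) • AddMonoidAlgebra.single
              (α, ((i, fun r => j r - (if r = p then 1 else 0)), l)) 1)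
    (hDn : ∀ (α : Γ) (i j : Fin m → ℕ) (l : ℕ),
      Dn (AddMonoidAlgebra.single (α, ((i, j), l)) 1)
        = φn α • AddMonoidAlgebra.single (α, ((i, j), l)) 1
          + (l : F) • AddMonoidAlgebra.single (α, ((i, j), l - 1)) 1)
    (hDel : ∀ (α : Γ) (i j : Fin m → ℕ) (l : ℕ),
      Del (AddMonoidAlgebra.single (α, ((i, j), l)) 1)
        = (∑ p : Fin m,
            ((if φ1 p = 0 then (i p : F) else φ1 p α)
              + (if φ2 p = 0 then (j p : F) else φ2 p α))) •
            AddMonoidAlgebra.single (α, ((i, j), l)) 1)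
    (br : KAlg F Γ m →ₗ[F] KAlg F Γ m →ₗ[F] KAlg F Γ m)
    (hbr : ∀ g h : KIndex Γ m,
      br (AddMonoidAlgebra.single g 1) (AddMonoidAlgebra.single h 1)
        = (∑ p : Fin m,
            AddMonoidAlgebra.single ((σ p, 0) : KIndex Γ m) 1 *
              (D1 p (AddMonoidAlgebra.single g 1) * D2 p (AddMonoidAlgebra.single h 1)
                - D2 p (AddMonoidAlgebra.single g 1) * D1 p (AddMonoidAlgebra.single h 1)))
          + AddMonoidAlgebra.single ((σn, 0) : KIndex Γ m) 1 *
              (((2 : F) • AddMonoidAlgebra.single g 1 - Del (AddMonoidAlgebra.single g 1)) *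
                  Dn (AddMonoidAlgebra.single h 1)
                - Dn (AddMonoidAlgebra.single g 1) *
                  ((2 : F) • AddMonoidAlgebra.single h 1 - Del (AddMonoidAlgebra.single h 1)))) :
    ∀ u v : KAlg F Γ m, Dn u = 0 → Dn v = 0 →
      (br u v = ∑ p : Fin m,
          AddMonoidAlgebra.single ((σ p, 0) : KIndex Γ m) 1 *
            (D1 p u * D2 p v - D2 p u * D1 p v)) ∧
      Dn (br u v) = 0 := by
  classical
  have hsingle_smul : ∀ (g : KIndex Γ m) (b : F),
      (AddMonoidAlgebra.single g b : KAlg F Γ m) = b • AddMonoidAlgebra.single g 1 := by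
    intro g b
    rw [AddMonoidAlgebra.smul_single', mul_one]
  -- one-variable extension
  have ext1 : ∀ (L R : Module.End F (KAlg F Γ m)),
      (∀ g, L (AddMonoidAlgebra.single g 1) = R (AddMonoidAlgebra.single g 1)) →
      ∀ u, L u = R u := by
    intro L R h u
    induction u using AddMonoidAlgebra.induction_linear with
    | zero => simp
    | add f₁ f₂ h₁ h₂ => rw [map_add, map_add, h₁, h₂]
    | single a b => rw [hsingle_smul a b, map_smul, map_smul, h]
  -- two-variable extension
  have ext2 : ∀ (L R : KAlg F Γ m →ₗ[F] KAlg F Γ m →ₗ[F] KAlg F Γ m),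
      (∀ g h', L (AddMonoidAlgebra.single g 1) (AddMonoidAlgebra.single h' 1)
             = R (AddMonoidAlgebra.single g 1) (AddMonoidAlgebra.single h' 1)) →
      ∀ u v, L u v = R u v := by
    intro L R hLR u v
    have hs : ∀ g w, L (AddMonoidAlgebra.single g 1) w = R (AddMonoidAlgebra.single g 1) w := by
      intro g w
      induction w using AddMonoidAlgebra.induction_linear with
      | zero => simp
      | add f₁ f₂ h₁ h₂ => rw [map_add, map_add, h₁, h₂]
      | single a b => rw [hsingle_smul a b, map_smul, map_smul, hLR]
    induction u using AddMonoidAlgebra.induction_linear with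
    | zero => simp
    | add f₁ f₂ h₁ h₂ => rw [map_add, map_add, LinearMap.add_apply, LinearMap.add_apply, h₁, h₂]
    | single a b =>
      rw [hsingle_smul a b, map_smul, map_smul, LinearMap.smul_apply, LinearMap.smul_apply, hs]
  -- `br` agrees with the explicit bilinear formula on all of `A`
  have hbrB : ∀ u v : KAlg F Γ m, br u v
      = (∑ p : Fin m, AddMonoidAlgebra.single ((σ p, 0) : KIndex Γ m) 1 *
            (D1 p u * D2 p v - D2 p u * D1 p v))
        + AddMonoidAlgebra.single ((σn, 0) : KIndex Γ m) 1 *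
            (((2:F) • u - Del u) * Dn v - Dn u * ((2:F) • v - Del v)) := by
    intro u v
    have key := ext2 br
      ((∑ p : Fin m, (((LinearMap.mul F (KAlg F Γ m)).compl₁₂ (D1 p) (D2 p)
          - (LinearMap.mul F (KAlg F Γ m)).compl₁₂ (D2 p) (D1 p)).compr₂
          (LinearMap.mulLeft F (AddMonoidAlgebra.single ((σ p, 0) : KIndex Γ m) 1))))
        + (((LinearMap.mul F (KAlg F Γ m)).compl₁₂ ((2:F) • LinearMap.id - Del) Dn
          - (LinearMap.mul F (KAlg F Γ m)).compl₁₂ Dn ((2:F) • LinearMap.id - Del)).compr₂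
          (LinearMap.mulLeft F (AddMonoidAlgebra.single ((σn, 0) : KIndex Γ m) 1)))) ?_ u v
    · simpa only [LinearMap.add_apply, LinearMap.sum_apply, LinearMap.compr₂_apply,
        LinearMap.sub_apply, LinearMap.compl₁₂_apply, LinearMap.mul_apply',
        LinearMap.mulLeft_apply, LinearMap.smul_apply, LinearMap.id_coe, id_eq] using key
    · intro g h'
      simp only [LinearMap.add_apply, LinearMap.sum_apply, LinearMap.compr₂_apply,
        LinearMap.sub_apply, LinearMap.compl₁₂_apply, LinearMap.mul_apply',
        LinearMap.mulLeft_apply, LinearMap.smul_apply, LinearMap.id_coe, id_eq]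
      exact hbr g h'
  -- `Dn` is a derivation
  have hder : ∀ a b : KAlg F Γ m, Dn (a * b) = Dn a * b + a * Dn b := by
    intro a b
    have key := ext2 ((LinearMap.mul F (KAlg F Γ m)).compr₂ Dn)
      ((LinearMap.mul F (KAlg F Γ m)).compl₁₂ Dn LinearMap.id
        + (LinearMap.mul F (KAlg F Γ m)).compl₁₂ LinearMap.id Dn) ?_ a b
    · simpa only [LinearMap.add_apply, LinearMap.compr₂_apply, LinearMap.compl₁₂_apply,
        LinearMap.mul_apply', LinearMap.id_coe, id_eq] using key
    · rintro ⟨α, ⟨i, j⟩, l⟩ ⟨β, ⟨i', j'⟩, l'⟩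
      simp only [LinearMap.add_apply, LinearMap.compr₂_apply, LinearMap.compl₁₂_apply,
        LinearMap.mul_apply', LinearMap.id_coe, id_eq]
      rw [AddMonoidAlgebra.single_mul_single, one_mul]
      have hidx : ((α, ((i, j), l)) : KIndex Γ m) + (β, ((i', j'), l'))
          = (α + β, ((i + i', j + j'), l + l')) := rfl
      rw [hidx, hDn, hDn, hDn]
      rw [add_mul, mul_add, smul_mul_assoc, smul_mul_assoc, mul_smul_comm, mul_smul_comm,
        AddMonoidAlgebra.single_mul_single, AddMonoidAlgebra.single_mul_single,
        AddMonoidAlgebra.single_mul_single]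
      simp only [one_mul, mul_one]
      rw [hidx]
      have h1 : ((l : F)) • (AddMonoidAlgebra.single (α + β, ((i + i', j + j'), l + l' - 1)) 1 : KAlg F Γ m)
          = (l : F) • AddMonoidAlgebra.single
              (((α, ((i, j), l - 1)) : KIndex Γ m) + (β, ((i', j'), l'))) 1 := by
        rcases Nat.eq_zero_or_pos l with h | h
        · subst h; simp
        · have hl : l + l' - 1 = (l - 1) + l' := by omega
          rw [show (((α, ((i, j), l - 1)) : KIndex Γ m) + (β, ((i', j'), l')))
              = (α + β, ((i + i', j + j'), (l - 1) + l')) from rfl, hl]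
      have h2 : ((l' : F)) • (AddMonoidAlgebra.single (α + β, ((i + i', j + j'), l + l' - 1)) 1 : KAlg F Γ m)
          = (l' : F) • AddMonoidAlgebra.single
              (((α, ((i, j), l)) : KIndex Γ m) + (β, ((i', j'), l' - 1))) 1 := by
        rcases Nat.eq_zero_or_pos l' with h | h
        · subst h; simp
        · have hl : l + l' - 1 = l + (l' - 1) := by omega
          rw [show (((α, ((i, j), l)) : KIndex Γ m) + (β, ((i', j'), l' - 1)))
              = (α + β, ((i + i', j + j'), l + (l' - 1))) from rfl, hl]
      rw [map_add φn, add_smul]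
      push_cast
      rw [add_smul, h1, h2]
      module
  -- `Dn` commutes with `D1 p`
  have hcomm1 : ∀ (p : Fin m) (u : KAlg F Γ m), Dn (D1 p u) = D1 p (Dn u) := by
    intro p u
    exact ext1 (Dn ∘ₗ D1 p) (D1 p ∘ₗ Dn) (fun g => by
      obtain ⟨α, ⟨i, j⟩, l⟩ := g
      simp only [LinearMap.comp_apply]
      rw [hD1, hDn, map_add, map_add, map_smul, map_smul, map_smul, map_smul,
        hDn, hDn, hD1, hD1]
      rw [smul_add, smul_add, smul_add, smul_add]
      rw [smul_smul, smul_smul, smul_smul, smul_smul, smul_smul, smul_smul, smul_smul, smul_smul]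
      ring_nf) u
  -- `Dn` commutes with `D2 p`
  have hcomm2 : ∀ (p : Fin m) (u : KAlg F Γ m), Dn (D2 p u) = D2 p (Dn u) := by
    intro p u
    exact ext1 (Dn ∘ₗ D2 p) (D2 p ∘ₗ Dn) (fun g => by
      obtain ⟨α, ⟨i, j⟩, l⟩ := g
      simp only [LinearMap.comp_apply]
      rw [hD2, hDn, map_add, map_add, map_smul, map_smul, map_smul, map_smul,
        hDn, hDn, hD2, hD2]
      rw [smul_add, smul_add, smul_add, smul_add]
      rw [smul_smul, smul_smul, smul_smul, smul_smul, smul_smul, smul_smul, smul_smul, smul_smul]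
      ring_nf) u
  -- `Dn` kills the coefficients `x₁^{σₚ}`
  have hDnc : ∀ p : Fin m, Dn (AddMonoidAlgebra.single ((σ p, 0) : KIndex Γ m) 1) = 0 := by
    intro p
    have h := hDn (σ p) 0 0 0
    rw [show ((σ p, (((0 : Fin m → ℕ), (0 : Fin m → ℕ)), 0)) : KIndex Γ m) = (σ p, 0) from rfl] at h
    rw [h, hσΓ1 p]
    simp
  intro u v hu hv
  have hmain : br u v = ∑ p : Fin m,
      AddMonoidAlgebra.single ((σ p, 0) : KIndex Γ m) 1 *
        (D1 p u * D2 p v - D2 p u * D1 p v) := by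
    rw [hbrB u v, hu, hv]
    simp
  refine ⟨hmain, ?_⟩
  rw [hmain, map_sum]
  refine Finset.sum_eq_zero fun p _ => ?_
  rw [hder, hDnc p, zero_mul, zero_add, map_sub, hder, hder,
    hcomm1 p u, hcomm1 p v, hcomm2 p u, hcomm2 p v, hu, hv]
  simp
end
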